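/- arXiv:1806.10963 — 8 statements merged into one kernel-verified Lean document; each statement's English description precedes it below -/
import Mathlib

section
/- A star graph K_{1,n} with n ≥ 2 leaves has no partition of its vertex set into two parts, each of size at least 2, such that every vertex u in a part C_i satisfies d_{C_i}(u)/(|C_i|-1) ≥ d_{C_j}(u)/|C_j| for the other part C_j. -/
lemma star_aux {V : Type*} [Fintype V] [DecidableEq V]
    (G : SimpleGraph V) [DecidableRel G.Adj] (c : V)
    (hstar : ∀ u v : V, G.Adj u v ↔ ((u = c ∧ v ≠ c) ∨ (v = c ∧ u ≠ c)))
    (A B : Finset V) (hdisj : Disjoint A B) (hcA : c ∈ A)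
    (hA : 2 ≤ A.card) (hB : 2 ≤ B.card)
    (hq : ∀ u ∈ B, ((B.filter (G.Adj u)).card : ℚ) / ((B.card : ℚ) - 1) ≥
        ((A.filter (G.Adj u)).card : ℚ) / (A.card : ℚ)) : False := by
  have hcB : c ∉ B := fun h => Finset.disjoint_left.mp hdisj hcA h
  obtain ⟨u, hu⟩ := Finset.card_pos.mp (by omega : 0 < B.card)
  have hune : u ≠ c := fun h => hcB (h ▸ hu)
  have hBfilt : B.filter (G.Adj u) = ∅ := by
    apply Finset.filter_eq_empty_iff.mpr
    intro v hv hadj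
    rcases (hstar u v).mp hadj with ⟨h1, _⟩ | ⟨h1, _⟩
    · exact hune h1
    · exact hcB (h1 ▸ hv)
  have hAfilt : 0 < ((A.filter (G.Adj u)).card : ℚ) := by
    have : 0 < (A.filter (G.Adj u)).card :=
      Finset.card_pos.mpr ⟨c, Finset.mem_filter.mpr ⟨hcA, (hstar u c).mpr (Or.inr ⟨rfl, hune⟩)⟩⟩
    exact_mod_cast this
  have hApos : (0 : ℚ) < (A.card : ℚ) := by
    have : 0 < A.card := by omega
    exact_mod_cast this
  have hpos : (0 : ℚ) < ((A.filter (G.Adj u)).card : ℚ) / (A.card : ℚ) :=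
    div_pos hAfilt hApos
  have := hq u hu
  rw [hBfilt] at this
  simp at this
  linarith

/-- A star graph `K_{1,n}` with `n ≥ 2` leaves has no partition of its vertex set into
two parts, each of size at least 2, such that every vertex `u` in a part `Cᵢ` satisfies
`d_{Cᵢ}(u)/(|Cᵢ|-1) ≥ d_{Cⱼ}(u)/|Cⱼ|` for the other part `Cⱼ`. -/
theorem star_no_strict_two_community {V : Type*} [Fintype V] [DecidableEq V]
    (G : SimpleGraph V) [DecidableRel G.Adj] (c : V) (n : ℕ) (hn : 2 ≤ n)
    (hcard : Fintype.card V = n + 1)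
    (hstar : ∀ u v : V, G.Adj u v ↔ ((u = c ∧ v ≠ c) ∨ (v = c ∧ u ≠ c))) :
    ¬ ∃ C1 C2 : Finset V, Disjoint C1 C2 ∧ C1 ∪ C2 = Finset.univ ∧
      2 ≤ C1.card ∧ 2 ≤ C2.card ∧
      (∀ u ∈ C1, ((C1.filter (G.Adj u)).card : ℚ) / ((C1.card : ℚ) - 1) ≥
        ((C2.filter (G.Adj u)).card : ℚ) / (C2.card : ℚ)) ∧
      (∀ u ∈ C2, ((C2.filter (G.Adj u)).card : ℚ) / ((C2.card : ℚ) - 1) ≥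
        ((C1.filter (G.Adj u)).card : ℚ) / (C1.card : ℚ)) := by
  rintro ⟨C1, C2, hdisj, huniv, h1, h2, hq1, hq2⟩
  have hc : c ∈ C1 ∪ C2 := huniv ▸ Finset.mem_univ c
  rcases Finset.mem_union.mp hc with hcA | hcA
  · exact star_aux G c hstar C1 C2 hdisj hcA h1 h2 hq2
  · exact star_aux G c hstar C2 C1 hdisj.symm hcA h2 h1 hq1
end

section
/- Let G be a connected graph and {C_1, C_2} a relaxed 2-community structure of G with C_1 = {v} a singleton. Then every neighbor of v is a universal vertex of G (adjacent to all other vertices). -/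
/-- If a connected graph on at least 3 vertices has a relaxed 2-community structure
`{C1, C2}` with `C1 = {v}` a singleton, then every neighbor of `v` is a universal vertex. -/
theorem singleton_community_neighbors_universal {V : Type*} [Fintype V] [DecidableEq V]
    (G : SimpleGraph V) [DecidableRel G.Adj] (hconn : G.Connected)
    (hcard : 3 ≤ Fintype.card V)
    (v : V) (C1 C2 : Finset V) (hC1 : C1 = {v})
    (hdisj : Disjoint C1 C2) (hunion : C1 ∪ C2 = Finset.univ)
    (hne1 : C1.Nonempty) (hne2 : C2.Nonempty)
    (hA : ∀ u ∈ C1, C2.card * (C1.filter (G.Adj u)).card ≥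
        (C1.card - 1) * (C2.filter (G.Adj u)).card)
    (hB : ∀ u ∈ C2, C1.card * (C2.filter (G.Adj u)).card ≥
        (C2.card - 1) * (C1.filter (G.Adj u)).card) :
    ∀ u : V, G.Adj v u → ∀ t : V, t ≠ u → G.Adj u t := by
  subst hC1
  intro u hvu t htu
  have huv : u ≠ v := fun h => G.irrefl (h ▸ hvu)
  have hu2 : u ∈ C2 := by
    have : u ∈ ({v} : Finset V) ∪ C2 := hunion ▸ Finset.mem_univ u
    rcases Finset.mem_union.mp this with h | h
    · exact absurd (Finset.mem_singleton.mp h) huv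
    · exact h
  have hfilt : ({v} : Finset V).filter (G.Adj u) = {v} := by
    apply Finset.filter_true_of_mem
    intro x hx
    rw [Finset.mem_singleton] at hx
    exact hx ▸ hvu.symm
  have hB' := hB u hu2
  rw [hfilt] at hB'
  simp only [Finset.card_singleton, one_mul, mul_one] at hB'
  -- hB' : (C2.filter (G.Adj u)).card ≥ C2.card - 1
  have hsub : C2.filter (G.Adj u) ⊆ C2.erase u := by
    intro x hx
    rw [Finset.mem_filter] at hx
    exact Finset.mem_erase.mpr ⟨fun h => G.irrefl (h ▸ hx.2), hx.1⟩
  have hcarde : (C2.erase u).card = C2.card - 1 := Finset.card_erase_of_mem hu2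
  have heq : C2.filter (G.Adj u) = C2.erase u :=
    Finset.eq_of_subset_of_card_le hsub (by omega)
  by_cases htv : t = v
  · exact htv ▸ hvu.symm
  · have ht2 : t ∈ C2 := by
      have : t ∈ ({v} : Finset V) ∪ C2 := hunion ▸ Finset.mem_univ t
      rcases Finset.mem_union.mp this with h | h
      · exact absurd (Finset.mem_singleton.mp h) htv
      · exact h
    have : t ∈ C2.filter (G.Adj u) := heq ▸ Finset.mem_erase.mpr ⟨htu, ht2⟩
    exact (Finset.mem_filter.mp this).2
end

section
/- Let G be a graph on n vertices containing a vertex w with degree n−2, whose unique non-neighbor is z, and suppose z is a pendant vertex whose neighbor y satisfies y ≠ w. Then in any relaxed 2-community structure {C_1, C_2} of G with both parts of size at least 2, w is in the community not containing z. -/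
lemma near_universal_key {V : Type*} [Fintype V] [DecidableEq V]
    (G : SimpleGraph V) [DecidableRel G.Adj] (w z : V)
    (hwz : w ≠ z)
    (hw : ∀ v : V, v ≠ w → v ≠ z → G.Adj w v) (hwznadj : ¬ G.Adj w z)
    (C D : Finset V) (hdisj : Disjoint C D)
    (hzC : z ∈ C) (hwC : w ∈ C) (hC : 2 ≤ C.card) (hD : 1 ≤ D.card)
    (hineq : D.card * (C.filter (G.Adj w)).card ≥
        (C.card - 1) * (D.filter (G.Adj w)).card) : False := by
  have hDfilt : D.filter (G.Adj w) = D := by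
    apply Finset.filter_true_of_mem
    intro v hv
    have hvw : v ≠ w := by
      rintro rfl; exact (Finset.disjoint_left.mp hdisj hwC) hv
    have hvz : v ≠ z := by
      rintro rfl; exact (Finset.disjoint_left.mp hdisj hzC) hv
    exact hw v hvw hvz
  have hCfilt : C.filter (G.Adj w) = (C.erase w).erase z := by
    ext v
    simp only [Finset.mem_filter, Finset.mem_erase]
    constructor
    · rintro ⟨hvC, hadj⟩
      exact ⟨fun h => hwznadj (h ▸ hadj), fun h => G.irrefl (h ▸ hadj), hvC⟩
    · rintro ⟨hvz, hvw, hvC⟩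
      exact ⟨hvC, hw v hvw hvz⟩
  have hcard : (C.filter (G.Adj w)).card = C.card - 2 := by
    rw [hCfilt, Finset.card_erase_of_mem (Finset.mem_erase.mpr ⟨hwz.symm, hzC⟩),
      Finset.card_erase_of_mem hwC]; omega
  rw [hDfilt, hcard] at hineq
  have h1 : C.card - 1 = (C.card - 2) + 1 := by omega
  rw [h1, Nat.add_mul, mul_comm] at hineq
  omega

/-- Let `w` have degree `n - 2`, non-adjacent only to `z`, where `z` is a pendant
vertex with unique neighbor `y ≠ w`. In any relaxed 2-community structure with both
parts of size at least 2, `w` and `z` lie in different communities. -/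
theorem near_universal_opposite_pendant {V : Type*} [Fintype V] [DecidableEq V]
    (G : SimpleGraph V) [DecidableRel G.Adj] (w z y : V)
    (hwz : w ≠ z) (hyw : y ≠ w)
    (hw : ∀ v : V, v ≠ w → v ≠ z → G.Adj w v) (hwznadj : ¬ G.Adj w z)
    (hzy : G.Adj z y) (hzonly : ∀ v : V, G.Adj z v → v = y)
    (hywadj : G.Adj y w)
    (C1 C2 : Finset V)
    (hdisj : Disjoint C1 C2) (hunion : C1 ∪ C2 = Finset.univ)
    (h1 : 2 ≤ C1.card) (h2 : 2 ≤ C2.card)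
    (hA : ∀ u ∈ C1, C2.card * (C1.filter (G.Adj u)).card ≥
        (C1.card - 1) * (C2.filter (G.Adj u)).card)
    (hB : ∀ u ∈ C2, C1.card * (C2.filter (G.Adj u)).card ≥
        (C2.card - 1) * (C1.filter (G.Adj u)).card) :
    (z ∈ C1 → w ∈ C2) ∧ (z ∈ C2 → w ∈ C1) := by
  have hwmem : w ∈ C1 ∪ C2 := by rw [hunion]; exact Finset.mem_univ w
  rw [Finset.mem_union] at hwmem
  constructor
  · intro hz
    rcases hwmem with hwC | hwC
    · exact absurd (near_universal_key G w z hwz hw hwznadj C1 C2 hdisj hz hwC h1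
        (by omega) (hA w hwC)) (fun h => h)
    · exact hwC
  · intro hz
    rcases hwmem with hwC | hwC
    · exact hwC
    · exact absurd (near_universal_key G w z hwz hw hwznadj C2 C1 hdisj.symm hz hwC h2
        (by omega) (hB w hwC)) (fun h => h)
end

section
/- Let G ∈ 𝒢 (as defined in context) with clique size parameter k ≥ 3. Consider a partition {A, B} of V(G) with w ∈ A, y, z ∈ B, B ∩ W_1 = ∅, B ∩ W_2 = ∅, and x ∈ B (so B = {x, y, z}). Then the vertex β ∈ N(x) ∩ N(y) ∩ (W_1 ∪ W_2) is not satisfied: d_A(β)/(|A|−1) < d_B(β)/|B|. -/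
theorem beta_not_satisfied
    {V : Type*} [Fintype V] [DecidableEq V] (G : SimpleGraph V) [DecidableRel G.Adj]
    (W1 W2 : Finset V) (w x y z : V) (k : ℕ) (hk : 3 ≤ k)
    (hW1card : W1.card = k) (hW2card : W2.card = k)
    (hdisj : Disjoint W1 W2)
    (hwnot : w ∉ W1 ∪ W2) (hxnot : x ∉ W1 ∪ W2) (hynot : y ∉ W1 ∪ W2) (hznot : z ∉ W1 ∪ W2)
    (hwx : w ≠ x) (hwy : w ≠ y) (hwz : w ≠ z) (hxy : x ≠ y) (hxz : x ≠ z) (hyz : y ≠ z)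
    (hcover : ∀ v : V, v ∈ W1 ∨ v ∈ W2 ∨ v = w ∨ v = x ∨ v = y ∨ v = z)
    (hclique1 : ∀ u ∈ W1, ∀ v ∈ W1, u ≠ v → G.Adj u v)
    (hclique2 : ∀ u ∈ W2, ∀ v ∈ W2, u ≠ v → G.Adj u v)
    (htri1 : G.Adj x y) (htri2 : G.Adj x w) (htri3 : G.Adj y w)
    (hwadj : ∀ v ∈ W1 ∪ W2, G.Adj w v)
    (hzy : G.Adj z y) (hzonly : ∀ v : V, G.Adj z v → v = y)
    (hxd1 : 1 ≤ (W1.filter (G.Adj x)).card)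
    (hxd2 : (W1.filter (G.Adj x)).card = (W2.filter (G.Adj x)).card)
    (hxd3 : (W1.filter (G.Adj x)).card ≤ k - 1)
    (hyd1 : 2 ≤ (W1.filter (G.Adj y)).card)
    (hyd2 : (W1.filter (G.Adj y)).card = (W2.filter (G.Adj y)).card)
    (hyd3 : (W1.filter (G.Adj y)).card ≤ k - 1)
    (hprop1 : 3 * k < (W1.filter (fun v => G.Adj x v ∨ G.Adj y v)).card * (k + 3))
    (hprop2 : 3 * k < (W2.filter (fun v => G.Adj x v ∨ G.Adj y v)).card * (k + 3))
    (α β : V) (hα1 : α ∈ W1 ∪ W2) (hα2 : G.Adj y α) (hα3 : ¬ G.Adj x α)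
    (hβ1 : β ∈ W1 ∪ W2) (hβ2 : G.Adj x β) (hβ3 : G.Adj y β)
    (hno12 : ∀ u ∈ W1, ∀ v ∈ W2, ¬ G.Adj u v)
    (A B : Finset V) (hB : B = {x, y, z}) (hA : A = Finset.univ \ B) :
    ((A.filter (G.Adj β)).card : ℚ) / ((A.card : ℚ) - 1) <
      ((B.filter (G.Adj β)).card : ℚ) / (B.card : ℚ) := by
  -- β is not w,x,y,z
  have hβw : β ≠ w := by rintro rfl; exact hwnot hβ1
  have hβx : β ≠ x := by rintro rfl; exact hxnot hβ1
  have hβy : β ≠ y := by rintro rfl; exact hynot hβ1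
  have hβz : β ≠ z := by rintro rfl; exact hznot hβ1
  -- B facts
  have hBcard : B.card = 3 := by
    subst hB
    rw [Finset.card_insert_of_notMem (by simp [hxy, hxz]),
        Finset.card_insert_of_notMem (by simp [hyz])]
    simp
  have hβznadj : ¬ G.Adj β z := fun h => hβy (hzonly β h.symm)
  have hBfilter : B.filter (G.Adj β) = {x, y} := by
    subst hB
    ext v
    simp only [Finset.mem_filter, Finset.mem_insert, Finset.mem_singleton]
    constructor
    · rintro ⟨h1 | h1 | h1, h2⟩ <;> subst h1
      · exact Or.inl rfl
      · exact Or.inr rfl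
      · exact absurd h2 hβznadj
    · rintro (rfl | rfl)
      · exact ⟨Or.inl rfl, hβ2.symm⟩
      · exact ⟨Or.inr (Or.inl rfl), hβ3.symm⟩
  -- A = W1 ∪ W2 ∪ {w}
  have hAeq : A = insert w (W1 ∪ W2) := by
    subst hA hB
    ext v
    simp only [Finset.mem_sdiff, Finset.mem_univ, true_and, Finset.mem_insert,
      Finset.mem_singleton, Finset.mem_union]
    constructor
    · intro hv
      push_neg at hv
      rcases hcover v with h | h | h | h | h | h
      · exact Or.inr (Or.inl h)
      · exact Or.inr (Or.inr h)
      · exact Or.inl h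
      · exact absurd h hv.1
      · exact absurd h hv.2.1
      · exact absurd h hv.2.2
    · rintro (rfl | h | h)
      · push_neg; exact ⟨hwx, hwy, hwz⟩
      · push_neg
        refine ⟨?_, ?_, ?_⟩ <;> rintro rfl
        · exact hxnot (Finset.mem_union_left _ h)
        · exact hynot (Finset.mem_union_left _ h)
        · exact hznot (Finset.mem_union_left _ h)
      · push_neg
        refine ⟨?_, ?_, ?_⟩ <;> rintro rfl
        · exact hxnot (Finset.mem_union_right _ h)
        · exact hynot (Finset.mem_union_right _ h)
        · exact hznot (Finset.mem_union_right _ h)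
  have hAcard : A.card = 2 * k + 1 := by
    rw [hAeq, Finset.card_insert_of_notMem hwnot,
      Finset.card_union_of_disjoint hdisj, hW1card, hW2card]
    ring
  -- A.filter card = k
  have key : ∀ (Wa Wb : Finset V), β ∈ Wa → β ∉ Wb →
      (∀ u ∈ Wa, ∀ v ∈ Wa, u ≠ v → G.Adj u v) →
      (∀ u ∈ Wa, ∀ v ∈ Wb, ¬ G.Adj u v) → Wa.card = k → w ∉ Wa ∪ Wb →
      ((insert w (Wa ∪ Wb)).filter (G.Adj β)).card = k := by
    intro Wa Wb hma hmb hcl hno hcard hwn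
    have : (insert w (Wa ∪ Wb)).filter (G.Adj β) = insert w (Wa.erase β) := by
      ext v
      simp only [Finset.mem_filter, Finset.mem_insert, Finset.mem_union, Finset.mem_erase]
      constructor
      · rintro ⟨rfl | h | h, hadj⟩
        · exact Or.inl rfl
        · exact Or.inr ⟨fun hvb => (SimpleGraph.irrefl G (hvb ▸ hadj)), h⟩
        · exact absurd hadj (hno β hma v h)
      · rintro (rfl | ⟨hne, hv⟩)
        · exact ⟨Or.inl rfl, (hwadj β (by
            rcases Finset.mem_union.mp (hβ1) with _ | _ <;> exact hβ1)).symm⟩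
        · exact ⟨Or.inr (Or.inl hv), hcl β hma v hv (Ne.symm hne)⟩
    rw [this, Finset.card_insert_of_notMem
        (fun h => hwn (Finset.mem_union_left _ (Finset.mem_of_mem_erase h))),
      Finset.card_erase_of_mem hma, hcard]
    omega
  have hAfilter : (A.filter (G.Adj β)).card = k := by
    rcases Finset.mem_union.mp hβ1 with h | h
    · rw [hAeq]
      exact key W1 W2 h (Finset.disjoint_left.mp hdisj h) hclique1 hno12 hW1card hwnot
    · rw [hAeq, Finset.union_comm W1 W2]
      exact key W2 W1 h (Finset.disjoint_right.mp hdisj h)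
        hclique2 (fun u hu v hv hadj => hno12 v hv u hu hadj.symm) hW2card
        (by rwa [Finset.union_comm])
  rw [hAfilter, hAcard, hBcard, hBfilter]
  have : ({x, y} : Finset V).card = 2 := by
    rw [Finset.card_insert_of_notMem (by simp [hxy]), Finset.card_singleton]
  rw [this]
  have hk' : (3:ℚ) ≤ (k:ℚ) := by exact_mod_cast hk
  rw [div_lt_div_iff₀ (by push_cast; linarith) (by norm_num)]
  push_cast
  linarith
end

section
/- Let G ∈ 𝒢 with parameter k ≥ 3. Consider the partition {A, B} with B = {y, z} and A = V \ B. Then the vertex α ∈ N(y) \ N(x) in W_1 ∪ W_2 is not satisfied: d_A(α)/(|A|−1) = k/(2k+1) < 1/2 = d_B(α)/|B|. -/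
lemma filter_card_aux {V : Type*} [Fintype V] [DecidableEq V] (G : SimpleGraph V)
    [DecidableRel G.Adj] (W W' : Finset V) (w x y z α : V) (k : ℕ)
    (hWcard : W.card = k)
    (hcover : ∀ v : V, v ∈ W ∨ v ∈ W' ∨ v = w ∨ v = x ∨ v = y ∨ v = z)
    (hclique : ∀ u ∈ W, ∀ v ∈ W, u ≠ v → G.Adj u v)
    (hno : ∀ u ∈ W, ∀ v ∈ W', ¬ G.Adj u v)
    (hα : α ∈ W) (hwα : G.Adj w α) (hxα : ¬ G.Adj x α)
    (hynotW : y ∉ W) (hwnotW : w ∉ W)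
    (hzonly : ∀ v : V, G.Adj z v → v = y)
    (hwy : w ≠ y) (hwz : w ≠ z)
    (A : Finset V) (hA : A = Finset.univ \ {y, z}) :
    (A.filter (G.Adj α)).card = k := by
  have hzα : ¬ G.Adj α z := by
    intro h
    have := hzonly α h.symm
    exact hynotW (this ▸ hα)
  have hset : A.filter (G.Adj α) = insert w (W.erase α) := by
    ext v
    simp only [Finset.mem_filter, hA, Finset.mem_sdiff, Finset.mem_univ, true_and,
      Finset.mem_insert, Finset.mem_erase]
    constructor
    · rintro ⟨hv, hadj⟩
      simp only [Finset.mem_insert, Finset.mem_singleton, not_or] at hv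
      rcases hcover v with h | h | h | h | h | h
      · right
        refine ⟨fun hve => ?_, h⟩
        exact G.irrefl (hve ▸ hadj)
      · exact absurd hadj (hno α hα v h)
      · exact Or.inl h
      · exact absurd hadj.symm (h ▸ hxα)
      · exact absurd h hv.1
      · exact absurd h hv.2
    · rintro (rfl | ⟨hvα, hvW⟩)
      · exact ⟨by simp [hwy, hwz], hwα.symm⟩
      · refine ⟨?_, hclique α hα v hvW (Ne.symm hvα)⟩
        simp only [Finset.mem_insert, Finset.mem_singleton, not_or]
        constructor
        · rintro rfl; exact hynotW hvW
        · rintro rfl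
          exact hzα (hclique α hα v hvW (Ne.symm hvα))
  rw [hset, Finset.card_insert_of_notMem (fun h => hwnotW (Finset.mem_of_mem_erase h)),
    Finset.card_erase_of_mem hα, hWcard]
  have hk1 : 1 ≤ k := hWcard ▸ Finset.card_pos.2 ⟨α, hα⟩
  omega

theorem alpha_not_satisfied
    {V : Type*} [Fintype V] [DecidableEq V] (G : SimpleGraph V) [DecidableRel G.Adj]
    (W1 W2 : Finset V) (w x y z : V) (k : ℕ) (hk : 3 ≤ k)
    (hW1card : W1.card = k) (hW2card : W2.card = k)
    (hdisj : Disjoint W1 W2)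
    (hwnot : w ∉ W1 ∪ W2) (hxnot : x ∉ W1 ∪ W2) (hynot : y ∉ W1 ∪ W2) (hznot : z ∉ W1 ∪ W2)
    (hwx : w ≠ x) (hwy : w ≠ y) (hwz : w ≠ z) (hxy : x ≠ y) (hxz : x ≠ z) (hyz : y ≠ z)
    (hcover : ∀ v : V, v ∈ W1 ∨ v ∈ W2 ∨ v = w ∨ v = x ∨ v = y ∨ v = z)
    (hclique1 : ∀ u ∈ W1, ∀ v ∈ W1, u ≠ v → G.Adj u v)
    (hclique2 : ∀ u ∈ W2, ∀ v ∈ W2, u ≠ v → G.Adj u v)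
    (htri1 : G.Adj x y) (htri2 : G.Adj x w) (htri3 : G.Adj y w)
    (hwadj : ∀ v ∈ W1 ∪ W2, G.Adj w v)
    (hzy : G.Adj z y) (hzonly : ∀ v : V, G.Adj z v → v = y)
    (hxd1 : 1 ≤ (W1.filter (G.Adj x)).card)
    (hxd2 : (W1.filter (G.Adj x)).card = (W2.filter (G.Adj x)).card)
    (hxd3 : (W1.filter (G.Adj x)).card ≤ k - 1)
    (hyd1 : 2 ≤ (W1.filter (G.Adj y)).card)
    (hyd2 : (W1.filter (G.Adj y)).card = (W2.filter (G.Adj y)).card)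
    (hyd3 : (W1.filter (G.Adj y)).card ≤ k - 1)
    (hprop1 : 3 * k < (W1.filter (fun v => G.Adj x v ∨ G.Adj y v)).card * (k + 3))
    (hprop2 : 3 * k < (W2.filter (fun v => G.Adj x v ∨ G.Adj y v)).card * (k + 3))
    (α β : V) (hα1 : α ∈ W1 ∪ W2) (hα2 : G.Adj y α) (hα3 : ¬ G.Adj x α)
    (hβ1 : β ∈ W1 ∪ W2) (hβ2 : G.Adj x β) (hβ3 : G.Adj y β)
    (hno12 : ∀ u ∈ W1, ∀ v ∈ W2, ¬ G.Adj u v)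
    (A B : Finset V) (hB : B = {y, z}) (hA : A = Finset.univ \ B) :
    ((A.filter (G.Adj α)).card : ℚ) / ((A.card : ℚ) - 1) = (k : ℚ) / (2 * k + 1) ∧
    (k : ℚ) / (2 * k + 1) < 1 / 2 ∧
    ((B.filter (G.Adj α)).card : ℚ) / (B.card : ℚ) = 1 / 2 := by
  subst hB
  have hy1 : y ∉ W1 := fun h => hynot (Finset.mem_union_left _ h)
  have hy2 : y ∉ W2 := fun h => hynot (Finset.mem_union_right _ h)
  have hw1 : w ∉ W1 := fun h => hwnot (Finset.mem_union_left _ h)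
  have hw2 : w ∉ W2 := fun h => hwnot (Finset.mem_union_right _ h)
  -- card of the neighborhood filter in A
  have hcardfA : (A.filter (G.Adj α)).card = k := by
    rcases Finset.mem_union.1 hα1 with h | h
    · exact filter_card_aux G W1 W2 w x y z α k hW1card hcover hclique1 hno12 h
        (hwadj α hα1) hα3 hy1 hw1 hzonly hwy hwz A hA
    · exact filter_card_aux G W2 W1 w x y z α k hW2card
        (fun v => by rcases hcover v with h | h | h; exacts [Or.inr (Or.inl h), Or.inl h, Or.inr (Or.inr h)])
        hclique2 (fun u hu v hv hadj => hno12 v hv u hu hadj.symm) h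
        (hwadj α hα1) hα3 hy2 hw2 hzonly hwy hwz A hA
  -- card of universe
  have huniv : (Finset.univ : Finset V) = (W1 ∪ W2) ∪ {w, x, y, z} := by
    ext v
    simp only [Finset.mem_univ, true_iff, Finset.mem_union, Finset.mem_insert,
      Finset.mem_singleton]
    rcases hcover v with h | h | h | h | h | h <;> tauto
  have hcardU : Fintype.card V = 2 * k + 4 := by
    rw [← Finset.card_univ, huniv, Finset.card_union_of_disjoint, Finset.card_union_of_disjoint hdisj]
    · have : ({w, x, y, z} : Finset V).card = 4 := by
        rw [Finset.card_insert_of_notMem (by simp [hwx, hwy, hwz]),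
          Finset.card_insert_of_notMem (by simp [hxy, hxz]),
          Finset.card_insert_of_notMem (by simp [hyz]), Finset.card_singleton]
      rw [hW1card, hW2card, this]; ring
    · rw [Finset.disjoint_right]
      intro v hv
      simp only [Finset.mem_insert, Finset.mem_singleton] at hv
      rcases hv with rfl | rfl | rfl | rfl
      exacts [hwnot, hxnot, hynot, hznot]
  have hcardA : A.card = 2 * k + 2 := by
    rw [hA, Finset.card_sdiff_of_subset (Finset.subset_univ _), Finset.card_univ, hcardU,
      Finset.card_insert_of_notMem (by simp [hyz]), Finset.card_singleton]
    omega
  -- B part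
  have hzα : ¬ G.Adj α z := by
    intro h
    have := hzonly α h.symm
    subst this
    exact hynot hα1
  have hfB : ({y, z} : Finset V).filter (G.Adj α) = {y} := by
    ext v
    simp only [Finset.mem_filter, Finset.mem_insert, Finset.mem_singleton]
    constructor
    · rintro ⟨rfl | rfl, hadj⟩
      · rfl
      · exact absurd hadj hzα
    · rintro rfl; exact ⟨Or.inl rfl, hα2.symm⟩
  have hcardB : ({y, z} : Finset V).card = 2 := by
    rw [Finset.card_insert_of_notMem (by simp [hyz]), Finset.card_singleton]
  refine ⟨?_, ?_, ?_⟩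
  · rw [hcardfA, hcardA]
    push_cast
    ring_nf
  · rw [div_lt_div_iff₀ (by positivity) (by norm_num)]
    push_cast
    nlinarith [hk]
  · rw [hfB, hcardB, Finset.card_singleton]
    norm_num
end

section
/- Let G ∈ 𝒢 with parameter k ≥ 3, and let {A, B} be a partition with w ∈ A, y, z, x ∈ B, B ∩ W_1 = ∅, and ∅ ≠ B ∩ W_2 ≠ W_2. If there exists u ∈ A ∩ W_2 with u ∈ N(x) ∪ N(y), then u is not satisfied, i.e., the satisfaction inequality d_A(u)/(|A|−1) ≥ d_B(u)/|B| fails. -/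
theorem u_not_satisfied
    {V : Type*} [Fintype V] [DecidableEq V] (G : SimpleGraph V) [DecidableRel G.Adj]
    (W1 W2 : Finset V) (w x y z : V) (k : ℕ) (hk : 3 ≤ k)
    (hW1card : W1.card = k) (hW2card : W2.card = k)
    (hdisj : Disjoint W1 W2)
    (hwnot : w ∉ W1 ∪ W2) (hxnot : x ∉ W1 ∪ W2) (hynot : y ∉ W1 ∪ W2) (hznot : z ∉ W1 ∪ W2)
    (hwx : w ≠ x) (hwy : w ≠ y) (hwz : w ≠ z) (hxy : x ≠ y) (hxz : x ≠ z) (hyz : y ≠ z)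
    (hcover : ∀ v : V, v ∈ W1 ∨ v ∈ W2 ∨ v = w ∨ v = x ∨ v = y ∨ v = z)
    (hclique1 : ∀ u ∈ W1, ∀ v ∈ W1, u ≠ v → G.Adj u v)
    (hclique2 : ∀ u ∈ W2, ∀ v ∈ W2, u ≠ v → G.Adj u v)
    (htri1 : G.Adj x y) (htri2 : G.Adj x w) (htri3 : G.Adj y w)
    (hwadj : ∀ v ∈ W1 ∪ W2, G.Adj w v)
    (hzy : G.Adj z y) (hzonly : ∀ v : V, G.Adj z v → v = y)
    (hxd1 : 1 ≤ (W1.filter (G.Adj x)).card)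
    (hxd2 : (W1.filter (G.Adj x)).card = (W2.filter (G.Adj x)).card)
    (hxd3 : (W1.filter (G.Adj x)).card ≤ k - 1)
    (hyd1 : 2 ≤ (W1.filter (G.Adj y)).card)
    (hyd2 : (W1.filter (G.Adj y)).card = (W2.filter (G.Adj y)).card)
    (hyd3 : (W1.filter (G.Adj y)).card ≤ k - 1)
    (hprop1 : 3 * k < (W1.filter (fun v => G.Adj x v ∨ G.Adj y v)).card * (k + 3))
    (hprop2 : 3 * k < (W2.filter (fun v => G.Adj x v ∨ G.Adj y v)).card * (k + 3))
    (α β : V) (hα1 : α ∈ W1 ∪ W2) (hα2 : G.Adj y α) (hα3 : ¬ G.Adj x α)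
    (hβ1 : β ∈ W1 ∪ W2) (hβ2 : G.Adj x β) (hβ3 : G.Adj y β)
    (hno12 : ∀ u ∈ W1, ∀ v ∈ W2, ¬ G.Adj u v)
    (A B : Finset V)
    (hdisjAB : Disjoint A B) (hunion : A ∪ B = Finset.univ)
    (hwA : w ∈ A) (hxB : x ∈ B) (hyB : y ∈ B) (hzB : z ∈ B)
    (hBW1 : B ∩ W1 = ∅) (hBW2ne : (B ∩ W2).Nonempty) (hBW2 : B ∩ W2 ≠ W2)
    (u : V) (hu : u ∈ A ∩ W2) (huxy : G.Adj x u ∨ G.Adj y u) :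
    ¬ (((A.filter (G.Adj u)).card : ℚ) / ((A.card : ℚ) - 1) ≥
      ((B.filter (G.Adj u)).card : ℚ) / (B.card : ℚ)) := by
  push_neg
  obtain ⟨huA, huW2⟩ := Finset.mem_inter.mp hu
  have hunW1 : u ∉ W1 := fun h => (Finset.disjoint_left.mp hdisj h) huW2
  have hmemA : ∀ v : V, v ∈ A ↔ v ∉ B := by
    intro v
    constructor
    · intro hv hvB; exact (Finset.disjoint_left.mp hdisjAB hv) hvB
    · intro hv
      have : v ∈ A ∪ B := hunion ▸ Finset.mem_univ v
      rcases Finset.mem_union.mp this with h | h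
      · exact h
      · exact absurd h hv
  have hxA : x ∉ A := fun h => (Finset.disjoint_left.mp hdisjAB h) hxB
  have hyA : y ∉ A := fun h => (Finset.disjoint_left.mp hdisjAB h) hyB
  have hzA : z ∉ A := fun h => (Finset.disjoint_left.mp hdisjAB h) hzB
  have hW1A : W1 ⊆ A := by
    intro v hv
    refine (hmemA v).mpr fun hvB => ?_
    have : v ∈ B ∩ W1 := Finset.mem_inter.mpr ⟨hvB, hv⟩
    simp [hBW1] at this
  have huw : u ≠ w := fun h => hwnot (h ▸ Finset.mem_union_right _ huW2)
  have hux : u ≠ x := fun h => hxnot (h ▸ Finset.mem_union_right _ huW2)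
  have huy : u ≠ y := fun h => hynot (h ▸ Finset.mem_union_right _ huW2)
  have huz : u ≠ z := fun h => hznot (h ▸ Finset.mem_union_right _ huW2)
  -- A.filter (G.Adj u) = insert w ((A ∩ W2).erase u)
  have hAfil : A.filter (G.Adj u) = insert w ((A ∩ W2).erase u) := by
    ext v
    simp only [Finset.mem_filter, Finset.mem_insert, Finset.mem_erase, Finset.mem_inter]
    constructor
    · rintro ⟨hvA, hadj⟩
      rcases hcover v with h | h | h | h | h | h
      · exact absurd hadj.symm (hno12 v h u huW2)
      · exact Or.inr ⟨hadj.ne', ⟨hvA, h⟩⟩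
      · exact Or.inl h
      · exact absurd hvA (h ▸ hxA)
      · exact absurd hvA (h ▸ hyA)
      · exact absurd hvA (h ▸ hzA)
    · rintro (rfl | ⟨hne, hvA, hvW2⟩)
      · exact ⟨hwA, (hwadj u (Finset.mem_union_right _ huW2)).symm⟩
      · exact ⟨hvA, hclique2 u huW2 v hvW2 (Ne.symm hne)⟩
  have hwne : w ∉ (A ∩ W2).erase u := by
    intro h
    exact hwnot (Finset.mem_union_right _ (Finset.mem_inter.mp (Finset.mem_erase.mp h).2).2)
  have hdA : (A.filter (G.Adj u)).card = (A ∩ W2).card := by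
    rw [hAfil, Finset.card_insert_of_notMem hwne, Finset.card_erase_of_mem hu]
    have : 1 ≤ (A ∩ W2).card := Finset.card_pos.mpr ⟨u, hu⟩
    omega
  -- B.filter bound
  obtain ⟨c, hcB, hcW2, hadjc⟩ : ∃ c, c ∈ B ∧ c ∉ W2 ∧ G.Adj u c := by
    rcases huxy with h | h
    · exact ⟨x, hxB, fun hx => hxnot (Finset.mem_union_right _ hx), h.symm⟩
    · exact ⟨y, hyB, fun hy => hynot (Finset.mem_union_right _ hy), h.symm⟩
  have hBsub : insert c (B ∩ W2) ⊆ B.filter (G.Adj u) := by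
    intro v hv
    rcases Finset.mem_insert.mp hv with rfl | hv
    · exact Finset.mem_filter.mpr ⟨hcB, hadjc⟩
    · obtain ⟨hvB, hvW2⟩ := Finset.mem_inter.mp hv
      have hne : u ≠ v := fun h => (Finset.disjoint_left.mp hdisjAB huA) (h ▸ hvB)
      exact Finset.mem_filter.mpr ⟨hvB, hclique2 u huW2 v hvW2 hne⟩
  have hcnot : c ∉ B ∩ W2 := fun h => hcW2 (Finset.mem_inter.mp h).2
  have hdB : (B ∩ W2).card + 1 ≤ (B.filter (G.Adj u)).card := by
    have := Finset.card_le_card hBsub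
    rwa [Finset.card_insert_of_notMem hcnot] at this
  -- cardinalities
  set m := (A ∩ W2).card with hm
  set b := (B ∩ W2).card with hb
  have hpart : (A ∩ W2) ∪ (B ∩ W2) = W2 := by
    rw [← Finset.union_inter_distrib_right, hunion, Finset.univ_inter]
  have hdisj2 : Disjoint (A ∩ W2) (B ∩ W2) :=
    (hdisjAB.mono (Finset.inter_subset_left) (Finset.inter_subset_left))
  have hmb : m + b = k := by
    rw [hm, hb, ← Finset.card_union_of_disjoint hdisj2, hpart, hW2card]
  have hb1 : 1 ≤ b := Finset.card_pos.mpr hBW2ne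
  have hm1 : 1 ≤ m := Finset.card_pos.mpr ⟨u, hu⟩
  -- A = W1 ∪ (A ∩ W2) ∪ {w}
  have hAeq : A = insert w (W1 ∪ (A ∩ W2)) := by
    ext v
    simp only [Finset.mem_insert, Finset.mem_union, Finset.mem_inter]
    constructor
    · intro hvA
      rcases hcover v with h | h | h | h | h | h
      · exact Or.inr (Or.inl h)
      · exact Or.inr (Or.inr ⟨hvA, h⟩)
      · exact Or.inl h
      · exact absurd hvA (h ▸ hxA)
      · exact absurd hvA (h ▸ hyA)
      · exact absurd hvA (h ▸ hzA)
    · rintro (rfl | h | h)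
      · exact hwA
      · exact hW1A h
      · exact h.1
  have hdj3 : Disjoint W1 (A ∩ W2) := hdisj.mono_right Finset.inter_subset_right
  have hwn : w ∉ W1 ∪ A ∩ W2 := by
    simp only [Finset.mem_union, Finset.mem_inter, not_or]
    exact ⟨fun h => hwnot (Finset.mem_union_left _ h), fun h => hwnot (Finset.mem_union_right _ h.2)⟩
  have hAcard : A.card = k + m + 1 := by
    rw [hAeq, Finset.card_insert_of_notMem hwn, Finset.card_union_of_disjoint hdj3, hW1card]
  have hBeq : B = insert x (insert y (insert z (B ∩ W2))) := by
    ext v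
    simp only [Finset.mem_insert, Finset.mem_inter]
    constructor
    · intro hvB
      rcases hcover v with h | h | h | h | h | h
      · have : v ∈ B ∩ W1 := Finset.mem_inter.mpr ⟨hvB, h⟩
        simp [hBW1] at this
      · exact Or.inr (Or.inr (Or.inr ⟨hvB, h⟩))
      · exact absurd hvB (h ▸ (fun hB => (Finset.disjoint_left.mp hdisjAB hwA) hB))
      · exact Or.inl h
      · exact Or.inr (Or.inl h)
      · exact Or.inr (Or.inr (Or.inl h))
    · rintro (rfl | rfl | rfl | h)
      · exact hxB
      · exact hyB
      · exact hzB
      · exact h.1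
  have hxW2 : x ∉ W2 := fun h => hxnot (Finset.mem_union_right _ h)
  have hyW2 : y ∉ W2 := fun h => hynot (Finset.mem_union_right _ h)
  have hzW2 : z ∉ W2 := fun h => hznot (Finset.mem_union_right _ h)
  have hzn : z ∉ B ∩ W2 := by simp only [Finset.mem_inter, not_and]; exact fun _ => hzW2
  have hyn : y ∉ insert z (B ∩ W2) := by
    simp only [Finset.mem_insert, Finset.mem_inter, not_or, not_and]
    exact ⟨hyz, fun _ => hyW2⟩
  have hxn : x ∉ insert y (insert z (B ∩ W2)) := by
    simp only [Finset.mem_insert, Finset.mem_inter, not_or, not_and]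
    exact ⟨hxy, hxz, fun _ => hxW2⟩
  have hBcard : B.card = b + 3 := by
    rw [hBeq, Finset.card_insert_of_notMem hxn, Finset.card_insert_of_notMem hyn,
        Finset.card_insert_of_notMem hzn]
  -- final arithmetic
  rw [hdA, hAcard, hBcard]
  have hdBq : ((b : ℚ) + 1) ≤ ((B.filter (G.Adj u)).card : ℚ) := by
    exact_mod_cast hdB
  have hden1 : (0 : ℚ) < ((k + m + 1 : ℕ) : ℚ) - 1 := by
    have h1 : (0:ℚ) ≤ (k:ℚ) := Nat.cast_nonneg k
    have h2 : (1:ℚ) ≤ (m:ℚ) := by exact_mod_cast hm1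
    push_cast; linarith
  have hden2 : (0 : ℚ) < ((b + 3 : ℕ) : ℚ) := Nat.cast_pos.mpr (by omega)
  rw [div_lt_div_iff₀ hden1 hden2]
  have hkq : (m : ℚ) + (b : ℚ) = (k : ℚ) := by exact_mod_cast hmb
  have hb1q : (1 : ℚ) ≤ (b : ℚ) := by exact_mod_cast hb1
  have hm1q : (1 : ℚ) ≤ (m : ℚ) := by exact_mod_cast hm1
  have hkq3 : (3 : ℚ) ≤ (k : ℚ) := by exact_mod_cast hk
  push_cast
  nlinarith [mul_le_mul_of_nonneg_right hdBq (le_of_lt (by push_cast at hden1 ⊢; linarith : (0:ℚ) < (k:ℚ) + m))]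
end

section
/- Let G ∈ 𝒢 with parameter k ≥ 3, and let {A, B} be any partition of V(G) with w ∈ A, y, z ∈ B (x placed arbitrarily), and both B ∩ W_1 ≠ ∅ and B ∩ W_2 ≠ ∅ with |B ∩ W_1| ≤ |B ∩ W_2|. Then no vertex u ∈ B ∩ W_1 is satisfied, i.e., for every u ∈ B ∩ W_1, |A| · d_B(u) < (|B|−1) · d_A(u). -/
theorem arith_aux1 (a c db da b1 k : ℕ) (h1 : db ≤ b1 + 1) (h2 : k + 1 ≤ da + b1)
    (h3 : 2*b1+2 ≤ c) (h4 : a + c + 1 = 2*k+4) (h5 : 1 ≤ b1) :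
    a * db < c * da := by
  nlinarith [Nat.mul_le_mul (le_refl a) h1, Nat.mul_le_mul h3 h2]

theorem arith_aux2 (a c db da b1 k : ℕ) (h1 : db ≤ b1) (h2 : k + 1 ≤ da + b1)
    (h3 : 2*b1+1 ≤ c) (h4 : a + c + 1 = 2*k+4) (h6 : b1 ≤ k) :
    a * db < c * da := by
  nlinarith [Nat.mul_le_mul (le_refl a) h1, Nat.mul_le_mul h3 h2]

theorem case_two_no_vertex_satisfied
    {V : Type*} [Fintype V] [DecidableEq V] (G : SimpleGraph V) [DecidableRel G.Adj]
    (W1 W2 : Finset V) (w x y z : V) (k : ℕ) (hk : 3 ≤ k)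
    (hW1card : W1.card = k) (hW2card : W2.card = k)
    (hdisj : Disjoint W1 W2)
    (hwnot : w ∉ W1 ∪ W2) (hxnot : x ∉ W1 ∪ W2) (hynot : y ∉ W1 ∪ W2) (hznot : z ∉ W1 ∪ W2)
    (hwx : w ≠ x) (hwy : w ≠ y) (hwz : w ≠ z) (hxy : x ≠ y) (hxz : x ≠ z) (hyz : y ≠ z)
    (hcover : ∀ v : V, v ∈ W1 ∨ v ∈ W2 ∨ v = w ∨ v = x ∨ v = y ∨ v = z)
    (hclique1 : ∀ u ∈ W1, ∀ v ∈ W1, u ≠ v → G.Adj u v)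
    (hclique2 : ∀ u ∈ W2, ∀ v ∈ W2, u ≠ v → G.Adj u v)
    (htri1 : G.Adj x y) (htri2 : G.Adj x w) (htri3 : G.Adj y w)
    (hwadj : ∀ v ∈ W1 ∪ W2, G.Adj w v)
    (hzy : G.Adj z y) (hzonly : ∀ v : V, G.Adj z v → v = y)
    (hxd1 : 1 ≤ (W1.filter (G.Adj x)).card)
    (hxd2 : (W1.filter (G.Adj x)).card = (W2.filter (G.Adj x)).card)
    (hxd3 : (W1.filter (G.Adj x)).card ≤ k - 1)
    (hyd1 : 2 ≤ (W1.filter (G.Adj y)).card)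
    (hyd2 : (W1.filter (G.Adj y)).card = (W2.filter (G.Adj y)).card)
    (hyd3 : (W1.filter (G.Adj y)).card ≤ k - 1)
    (hprop1 : 3 * k < (W1.filter (fun v => G.Adj x v ∨ G.Adj y v)).card * (k + 3))
    (hprop2 : 3 * k < (W2.filter (fun v => G.Adj x v ∨ G.Adj y v)).card * (k + 3))
    (α β : V) (hα1 : α ∈ W1 ∪ W2) (hα2 : G.Adj y α) (hα3 : ¬ G.Adj x α)
    (hβ1 : β ∈ W1 ∪ W2) (hβ2 : G.Adj x β) (hβ3 : G.Adj y β)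
    (hno12 : ∀ u ∈ W1, ∀ v ∈ W2, ¬ G.Adj u v)
    (A B : Finset V)
    (hdisjAB : Disjoint A B) (hunion : A ∪ B = Finset.univ)
    (hwA : w ∈ A) (hyB : y ∈ B) (hzB : z ∈ B)
    (hBW1ne : (B ∩ W1).Nonempty) (hBW2ne : (B ∩ W2).Nonempty)
    (hle : (B ∩ W1).card ≤ (B ∩ W2).card) :
    ∀ u ∈ B ∩ W1,
      A.card * (B.filter (G.Adj u)).card < (B.card - 1) * (A.filter (G.Adj u)).card := by
  intro u hu
  obtain ⟨huB, huW1⟩ := Finset.mem_inter.mp hu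
  have huw : u ≠ w := fun h => hwnot (h ▸ Finset.mem_union_left _ huW1)
  have huy : u ≠ y := fun h => hynot (h ▸ Finset.mem_union_left _ huW1)
  have hwB : w ∉ B := Finset.disjoint_left.mp hdisjAB hwA
  -- universe cardinality
  have hsetcard : ({w, x, y, z} : Finset V).card = 4 := by
    rw [Finset.card_insert_of_notMem (by simp [hwx, hwy, hwz]),
        Finset.card_insert_of_notMem (by simp [hxy, hxz]),
        Finset.card_insert_of_notMem (by simp [hyz]), Finset.card_singleton]
  have hdisjW4 : Disjoint (W1 ∪ W2) ({w, x, y, z} : Finset V) := by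
    rw [Finset.disjoint_right]
    intro a ha haW
    simp only [Finset.mem_insert, Finset.mem_singleton] at ha
    rcases ha with rfl | rfl | rfl | rfl
    exacts [hwnot haW, hxnot haW, hynot haW, hznot haW]
  have huniv : (W1 ∪ W2) ∪ ({w, x, y, z} : Finset V) = Finset.univ := by
    apply Finset.eq_univ_iff_forall.mpr
    intro v
    rcases hcover v with h | h | h | h | h | h <;>
      simp [h, Finset.mem_union]
  have hVcard : (Finset.univ : Finset V).card = 2 * k + 4 := by
    rw [← huniv, Finset.card_union_of_disjoint hdisjW4,
        Finset.card_union_of_disjoint hdisj, hW1card, hW2card, hsetcard]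
    ring
  have hAB : A.card + B.card = 2 * k + 4 := by
    rw [← Finset.card_union_of_disjoint hdisjAB, hunion, hVcard]
  -- split of W1
  have hW1split : (A ∩ W1).card + (B ∩ W1).card = k := by
    rw [← Finset.card_union_of_disjoint
        (hdisjAB.mono (Finset.inter_subset_left) (Finset.inter_subset_left))]
    rw [← Finset.union_inter_distrib_right, hunion, Finset.univ_inter, hW1card]
  have hb1pos : 1 ≤ (B ∩ W1).card := Finset.card_pos.mpr ⟨u, hu⟩
  have hb1k : (B ∩ W1).card ≤ k := by
    calc (B ∩ W1).card ≤ W1.card := Finset.card_le_card (Finset.inter_subset_right)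
    _ = k := hW1card
  -- lower bound on d_A(u)
  have hAsub : insert w (A ∩ W1) ⊆ A.filter (G.Adj u) := by
    intro v hv
    rcases Finset.mem_insert.mp hv with rfl | hv
    · exact Finset.mem_filter.mpr ⟨hwA, (hwadj u (Finset.mem_union_left _ huW1)).symm⟩
    · obtain ⟨hvA, hvW1⟩ := Finset.mem_inter.mp hv
      refine Finset.mem_filter.mpr ⟨hvA, hclique1 u huW1 v hvW1 ?_⟩
      rintro rfl
      exact (Finset.disjoint_left.mp hdisjAB hvA) huB
  have hdA : (A ∩ W1).card + 1 ≤ (A.filter (G.Adj u)).card := by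
    have h1 := Finset.card_le_card hAsub
    rwa [Finset.card_insert_of_notMem
      (fun h => hwnot (Finset.mem_union_left _ (Finset.mem_inter.mp h).2))] at h1
  -- upper bound on d_B(u)
  have hBsub : B.filter (G.Adj u) ⊆ insert x (insert y ((B ∩ W1).erase u)) := by
    intro v hv
    obtain ⟨hvB, hadj⟩ := Finset.mem_filter.mp hv
    rcases hcover v with h1 | h2 | rfl | rfl | rfl | rfl
    · simp only [Finset.mem_insert, Finset.mem_erase, Finset.mem_inter]
      exact Or.inr (Or.inr ⟨hadj.ne', hvB, h1⟩)
    · exact absurd hadj (hno12 u huW1 v h2)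
    · exact absurd hvB hwB
    · exact Finset.mem_insert_self _ _
    · exact Finset.mem_insert_of_mem (Finset.mem_insert_self _ _)
    · exact absurd (hzonly u hadj.symm) huy
  have herase : ((B ∩ W1).erase u).card + 1 = (B ∩ W1).card :=
    Finset.card_erase_add_one hu
  -- lower bound on |B|
  have hins : (insert y (insert z ((B ∩ W1) ∪ (B ∩ W2)))).card
      = (B ∩ W1).card + (B ∩ W2).card + 2 := by
    have hz' : z ∉ (B ∩ W1) ∪ (B ∩ W2) := by
      intro h
      rcases Finset.mem_union.mp h with h | h
      · exact hznot (Finset.mem_union_left _ (Finset.mem_inter.mp h).2)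
      · exact hznot (Finset.mem_union_right _ (Finset.mem_inter.mp h).2)
    have hy' : y ∉ insert z ((B ∩ W1) ∪ (B ∩ W2)) := by
      intro h
      rcases Finset.mem_insert.mp h with h | h
      · exact hyz h
      rcases Finset.mem_union.mp h with h | h
      · exact hynot (Finset.mem_union_left _ (Finset.mem_inter.mp h).2)
      · exact hynot (Finset.mem_union_right _ (Finset.mem_inter.mp h).2)
    rw [Finset.card_insert_of_notMem hy', Finset.card_insert_of_notMem hz',
        Finset.card_union_of_disjoint
          (hdisj.mono (Finset.inter_subset_right) (Finset.inter_subset_right))]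
  have hsubB : insert y (insert z ((B ∩ W1) ∪ (B ∩ W2))) ⊆ B := by
    intro v hv
    rcases Finset.mem_insert.mp hv with rfl | hv
    · exact hyB
    rcases Finset.mem_insert.mp hv with rfl | hv
    · exact hzB
    rcases Finset.mem_union.mp hv with hv | hv
    · exact (Finset.mem_inter.mp hv).1
    · exact (Finset.mem_inter.mp hv).1
  have hBlow : (B ∩ W1).card + (B ∩ W2).card + 2 ≤ B.card := by
    have h1 := Finset.card_le_card hsubB
    omega
  -- abbreviations
  set b1 := (B ∩ W1).card with hb1
  set b2 := (B ∩ W2).card with hb2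
  set da := (A.filter (G.Adj u)).card with hda
  set db := (B.filter (G.Adj u)).card with hdb
  have hdak : k + 1 ≤ da + b1 := by omega
  obtain ⟨c, hc⟩ : ∃ c, B.card = c + 1 := ⟨B.card - 1, by omega⟩
  have hgoal : B.card - 1 = c := by omega
  rw [hgoal]
  by_cases hxB : x ∈ B
  · -- x ∈ B : |B| ≥ b1 + b2 + 3, db ≤ b1 + 1
    have hxset : x ∉ insert y (insert z ((B ∩ W1) ∪ (B ∩ W2))) := by
      intro h
      rcases Finset.mem_insert.mp h with h | h
      · exact hxy h
      rcases Finset.mem_insert.mp h with h | h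
      · exact hxz h
      rcases Finset.mem_union.mp h with h | h
      · exact hxnot (Finset.mem_union_left _ (Finset.mem_inter.mp h).2)
      · exact hxnot (Finset.mem_union_right _ (Finset.mem_inter.mp h).2)
    have hBlow' : b1 + b2 + 3 ≤ B.card := by
      have h1 := Finset.card_le_card (Finset.insert_subset hxB hsubB)
      rw [Finset.card_insert_of_notMem hxset, hins] at h1
      omega
    have hdbB : db ≤ b1 + 1 := by
      have h1 := Finset.card_le_card hBsub
      have h2 := Finset.card_insert_le x (insert y ((B ∩ W1).erase u))
      have h3 := Finset.card_insert_le y ((B ∩ W1).erase u)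
      omega
    have hc1 : 2 * b1 + 2 ≤ c := by omega
    have hA' : A.card + c + 1 = 2 * k + 4 := by omega
    exact arith_aux1 A.card c db da b1 k hdbB hdak hc1 hA' hb1pos
  · -- x ∈ A : db ≤ b1
    have hdbB : db ≤ b1 := by
      have h1 : B.filter (G.Adj u) ⊆ insert y ((B ∩ W1).erase u) := by
        intro v hv
        have h2 := hBsub hv
        rcases Finset.mem_insert.mp h2 with rfl | h2
        · exact absurd (Finset.mem_filter.mp hv).1 hxB
        · exact h2
      have h3 := Finset.card_le_card h1
      have h4 := Finset.card_insert_le y ((B ∩ W1).erase u)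
      omega
    have hc1 : 2 * b1 + 1 ≤ c := by omega
    have hA' : A.card + c + 1 = 2 * k + 4 := by omega
    exact arith_aux2 A.card c db da b1 k hdbB hdak hc1 hA' hb1k
end

section
/- Main theorem: every graph G in the class 𝒢 has no relaxed 2-community structure, i.e., there is no partition {A, B} of V(G) into two nonempty parts such that for all u ∈ A, |B| · d_A(u) ≥ (|A|−1) · d_B(u), and for all u ∈ B, |A| · d_B(u) ≥ (|B|−1) · d_A(u). -/
section Leaves

lemma leafWA (a' b d : ℕ) (hb : 1 ≤ b) (hd : a' = d + 1)
    (h : b * d ≥ a' * b) : False := by subst hd; nlinarith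

lemma leaf1 (k : ℕ) (hk : 3 ≤ k) (h : (2*k+3) * k ≥ (2*k) * (k+2)) : False := by nlinarith

lemma leaf2 (k : ℕ) (h : (2*k+3) * k ≥ (2*k+1) * (k+1)) : False := by nlinarith

lemma leaf3 (k χ : ℕ) (hk : 3 ≤ k) (hχ : χ ≤ 1)
    (h : (2*k+3) * (k+χ) ≥ (2*k+1+χ) * (k+2)) : False := by
  interval_cases χ <;> nlinarith

set_option maxHeartbeats 1000000 in
lemma leaf4 (k s χ p q d : ℕ) (hk : 3 ≤ k) (hs1 : 1 ≤ s) (hs2 : s + 1 ≤ k)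
    (hχ : χ ≤ 1) (hp : p ≤ 1) (hq : q ≤ 1) (hd : d + 1 = s + χ*p + q)
    (h : (2*k+3) * d ≥ (k+s+1+χ) * (k+p+q)) : False := by
  interval_cases χ <;> interval_cases p <;> interval_cases q <;>
    nlinarith [h, hd, Nat.mul_le_mul_left (k+3) hs2, Nat.mul_le_mul_left (k+2) hs2,
      Nat.mul_le_mul_left (k+1) hs2, Nat.mul_le_mul_left k hs2]

set_option maxHeartbeats 1000000 in
lemma leaf5 (k s1 s2 p1 q1 p2 q2 d1 d2 : ℕ) (hk : 3 ≤ k)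
    (h11 : 1 ≤ s1) (h12 : s1 + 1 ≤ k) (h21 : 1 ≤ s2) (h22 : s2 + 1 ≤ k)
    (hp1 : p1 ≤ 1) (hq1 : q1 ≤ 1) (hp2 : p2 ≤ 1) (hq2 : q2 ≤ 1)
    (hd1 : d1 + 1 = s1 + p1 + q1) (hd2 : d2 + 1 = s2 + p2 + q2)
    (H1 : (2*k+3) * d1 ≥ (s1+s2+2) * (k+p1+q1))
    (H2 : (2*k+3) * d2 ≥ (s1+s2+2) * (k+p2+q2)) : False := by
  zify at H1 H2 hd1 hd2 h12 h22 hp1 hq1 hp2 hq2 hk h11 h21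
  nlinarith [H1, H2, hd1, hd2,
    mul_nonneg (by linarith : (0:ℤ) ≤ 4 - (p1+q1+p2+q2)) (by linarith : (0:ℤ) ≤ 8*k+6-3*(s1+s2)),
    mul_nonneg (by linarith : (0:ℤ) ≤ (p1+q1+p2+q2)) (by linarith : (0:ℤ) ≤ (s1+s2)+2)]

lemma leaf6 (k s1 s2 : ℕ) (h12 : s1 + 1 ≤ k) (h22 : s2 + 1 ≤ k)
    (H1 : (2*k+3) * s1 ≥ (s1+s2+1) * (k+1))
    (H2 : (2*k+3) * s2 ≥ (s1+s2+1) * (k+1)) : False := by nlinarith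

lemma leaf7 (k s1 s2 d1 d2 : ℕ) (h12 : s1 + 1 ≤ k) (h22 : s2 + 1 ≤ k)
    (hd1 : d1 + 1 = s1) (hd2 : d2 + 1 = s2)
    (H1 : (2*k+3) * d1 ≥ (s1+s2+1) * k)
    (H2 : (2*k+3) * d2 ≥ (s1+s2+1) * k) : False := by nlinarith

lemma leaf8 (k s1 s2 d1 : ℕ) (h12 : s1 + 1 ≤ k) (h22 : s2 + 1 ≤ k)
    (hd1 : d1 + 1 = s1)
    (H1 : (2*k+3) * d1 ≥ (s1+s2+1) * k)
    (H2 : (2*k+3) * s2 ≥ (s1+s2+1) * (k+1)) : False := by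
  zify at *
  nlinarith [mul_le_mul_of_nonneg_left H1 (by linarith : (0:ℤ) ≤ k+2),
    mul_le_mul_of_nonneg_left H2 (by linarith : (0:ℤ) ≤ k)]

lemma leaf9 (k sa sb t p' q' da : ℕ) (hk : 3 ≤ k) (ha1 : 1 ≤ sa) (ha2 : sa + 1 ≤ k)
    (hb1 : 1 ≤ sb) (hb2 : sb + 1 ≤ k) (ht : t + sa = k) (hp : p' ≤ 1) (hq : q' ≤ 1)
    (hda : da + 1 = sa)
    (H1 : (2*k+3) * da ≥ (sa+sb+1) * (k+1))
    (H2 : (2*k+3) * (t+p') ≥ (2*k+1-(sa+sb)) * (k+p'+q')) : False := by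
  have h2 : 2*k+1-(sa+sb) = 2*k+1-sa-sb := by omega
  rw [h2] at H2
  interval_cases p' <;> interval_cases q' <;>
    (zify [show sb ≤ 2*k+1-sa by omega, show sa ≤ 2*k+1 by omega] at H2; zify at *; nlinarith)

lemma leaf10 (k sa t p q : ℕ) (hk : 3 ≤ k) (ha1 : 1 ≤ sa) (ht : t + sa = k)
    (hpq : 1 ≤ p + q) (hp : p ≤ 1) (hq : q ≤ 1)
    (H : (2*k+3) * t ≥ (2*k - sa) * (k+p+q)) : False := by
  zify [show sa ≤ 2*k by omega] at H
  zify at *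
  nlinarith

lemma leaf11 (k sa t ua : ℕ) (hk : 3 ≤ k) (ht : t + sa = k) (hua : ua ≤ sa)
    (hprop : 3*k < ua * (k+3))
    (H : (2*k+3) * t ≥ (2*k - sa) * k) : False := by
  zify [show sa ≤ 2*k by omega] at H
  zify at *
  nlinarith

lemma leaf12 (k sa t p' : ℕ) (hk : 3 ≤ k) (ha1 : 1 ≤ sa) (ht : t + sa = k) (hp : p' ≤ 1)
    (H : (2*k+3) * (t+p') ≥ (2*k+1 - sa) * (k+p'+1)) : False := by
  interval_cases p' <;> (zify [show sa ≤ 2*k+1 by omega] at H; zify at *; nlinarith)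

lemma leaf13 (k sa t p' : ℕ) (hk : 3 ≤ k) (ha1 : 2 ≤ sa) (ha2 : sa + 1 ≤ k)
    (ht : t + sa = k) (hp : p' ≤ 1)
    (H : (2*k+3) * (t+p') ≥ (2*k+1 - sa) * (k+p')) : False := by
  interval_cases p' <;> (zify [show sa ≤ 2*k+1 by omega] at H; zify at *; nlinarith)

lemma leaf14 (k d : ℕ) (h : (2*k+3) * (d+1) ≥ (k+2) * (2*d+2)) : False := by nlinarith

lemma leaf15 (k dy : ℕ) (hdy : dy + 1 ≤ k) (h : (2*k+3) * (dy+1) ≥ (k+1) * (2*dy+3)) : False := by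
  nlinarith

end Leaves

set_option maxHeartbeats 2000000 in
lemma keyX {V : Type*} [Fintype V] [DecidableEq V] (G : SimpleGraph V) [DecidableRel G.Adj]
    (W1 W2 : Finset V) (w x y z : V) (k : ℕ) (hk : 3 ≤ k)
    (hW1card : W1.card = k) (hW2card : W2.card = k)
    (hdisj : Disjoint W1 W2)
    (hwnot : w ∉ W1 ∪ W2) (hxnot : x ∉ W1 ∪ W2) (hynot : y ∉ W1 ∪ W2) (hznot : z ∉ W1 ∪ W2)
    (hwx : w ≠ x) (hwy : w ≠ y) (hwz : w ≠ z) (hxy : x ≠ y) (hxz : x ≠ z) (hyz : y ≠ z)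
    (hcover : ∀ v : V, v ∈ W1 ∨ v ∈ W2 ∨ v = w ∨ v = x ∨ v = y ∨ v = z)
    (hclique1 : ∀ u ∈ W1, ∀ v ∈ W1, u ≠ v → G.Adj u v)
    (hclique2 : ∀ u ∈ W2, ∀ v ∈ W2, u ≠ v → G.Adj u v)
    (htri1 : G.Adj x y) (htri2 : G.Adj x w) (htri3 : G.Adj y w)
    (hwadj : ∀ v ∈ W1 ∪ W2, G.Adj w v)
    (hzy : G.Adj z y) (hzonly : ∀ v : V, G.Adj z v → v = y)
    (hxd1 : 1 ≤ (W1.filter (G.Adj x)).card)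
    (hxd2 : (W1.filter (G.Adj x)).card = (W2.filter (G.Adj x)).card)
    (hxd3 : (W1.filter (G.Adj x)).card ≤ k - 1)
    (hyd1 : 2 ≤ (W1.filter (G.Adj y)).card)
    (hyd2 : (W1.filter (G.Adj y)).card = (W2.filter (G.Adj y)).card)
    (hyd3 : (W1.filter (G.Adj y)).card ≤ k - 1)
    (hprop1 : 3 * k < (W1.filter (fun v => G.Adj x v ∨ G.Adj y v)).card * (k + 3))
    (hprop2 : 3 * k < (W2.filter (fun v => G.Adj x v ∨ G.Adj y v)).card * (k + 3))
    (α β : V) (hα1 : α ∈ W1 ∪ W2) (hα2 : G.Adj y α) (hα3 : ¬ G.Adj x α)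
    (hβ1 : β ∈ W1 ∪ W2) (hβ2 : G.Adj x β) (hβ3 : G.Adj y β)
    (hno12 : ∀ u ∈ W1, ∀ v ∈ W2, ¬ G.Adj u v)
    (A B : Finset V) (hAB : Disjoint A B) (hU : A ∪ B = Finset.univ)
    (hAne : A.Nonempty) (hBne : B.Nonempty)
    (hA : ∀ u ∈ A, B.card * (A.filter (G.Adj u)).card ≥
        (A.card - 1) * (B.filter (G.Adj u)).card)
    (hB : ∀ u ∈ B, A.card * (B.filter (G.Adj u)).card ≥
        (B.card - 1) * (A.filter (G.Adj u)).card)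
    (hyA : y ∈ A) : False := by
  classical
  -- basic membership facts
  have hor : ∀ v : V, v ∈ A ∨ v ∈ B := by
    intro v
    have : v ∈ A ∪ B := by rw [hU]; exact Finset.mem_univ v
    exact Finset.mem_union.mp this
  have hnB : ∀ v : V, v ∈ A → v ∉ B := fun v hv hv' => (Finset.disjoint_left.mp hAB hv hv')
  have hnA : ∀ v : V, v ∈ B → v ∉ A := fun v hv hv' => (Finset.disjoint_left.mp hAB hv' hv)
  have hw1 : w ∉ W1 := fun h => hwnot (Finset.mem_union_left _ h)
  have hw2 : w ∉ W2 := fun h => hwnot (Finset.mem_union_right _ h)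
  have hx1 : x ∉ W1 := fun h => hxnot (Finset.mem_union_left _ h)
  have hx2 : x ∉ W2 := fun h => hxnot (Finset.mem_union_right _ h)
  have hy1 : y ∉ W1 := fun h => hynot (Finset.mem_union_left _ h)
  have hy2 : y ∉ W2 := fun h => hynot (Finset.mem_union_right _ h)
  have hz1 : z ∉ W1 := fun h => hznot (Finset.mem_union_left _ h)
  have hz2 : z ∉ W2 := fun h => hznot (Finset.mem_union_right _ h)
  -- the quadruple card lemma
  have card4 : ∀ C : Finset V, (C ∩ {w, x, y, z}).card =
      ((if w ∈ C then 1 else 0) + (if x ∈ C then 1 else 0) +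
       (if y ∈ C then 1 else 0) + (if z ∈ C then 1 else 0)) := by
    intro C
    have he : C ∩ {w, x, y, z} = ({w, x, y, z} : Finset V).filter (· ∈ C) := by
      ext v
      simp only [Finset.mem_inter, Finset.mem_filter]
      tauto
    rw [he]
    rw [show ({w, x, y, z} : Finset V) = insert w (insert x (insert y ({z} : Finset V))) from rfl]
    rw [Finset.filter_insert, Finset.filter_insert, Finset.filter_insert, Finset.filter_singleton]
    by_cases h1 : w ∈ C <;> by_cases h2 : x ∈ C <;> by_cases h3 : y ∈ C <;> by_cases h4 : z ∈ C <;>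
      simp [h1, h2, h3, h4, Finset.card_insert_of_notMem, Finset.mem_insert,
        Finset.mem_singleton, hwx, hwy, hwz, hxy, hxz, hyz]
  -- the cardinality decomposition
  have cardC : ∀ C : Finset V, C.card = (C ∩ W1).card + (C ∩ W2).card +
      ((if w ∈ C then 1 else 0) + (if x ∈ C then 1 else 0) +
       (if y ∈ C then 1 else 0) + (if z ∈ C then 1 else 0)) := by
    intro C
    have hdecomp : C = ((C ∩ W1) ∪ (C ∩ W2)) ∪ (C ∩ {w, x, y, z}) := by
      ext v
      simp only [Finset.mem_union, Finset.mem_inter, Finset.mem_insert, Finset.mem_singleton]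
      constructor
      · intro hv
        rcases hcover v with h | h | h | h | h | h <;> tauto
      · tauto
    have d1 : Disjoint (C ∩ W1) (C ∩ W2) := by
      apply Finset.disjoint_left.mpr
      intro v hv hv'
      exact (Finset.disjoint_left.mp hdisj (Finset.mem_inter.mp hv).2 (Finset.mem_inter.mp hv').2)
    have d2 : Disjoint ((C ∩ W1) ∪ (C ∩ W2)) (C ∩ {w, x, y, z}) := by
      apply Finset.disjoint_left.mpr
      intro v hv hv'
      have hv2 := (Finset.mem_inter.mp hv').2
      simp only [Finset.mem_insert, Finset.mem_singleton] at hv2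
      rcases Finset.mem_union.mp hv with h | h <;>
        have := (Finset.mem_inter.mp h).2 <;>
        rcases hv2 with rfl | rfl | rfl | rfl <;> tauto
    calc C.card = (((C ∩ W1) ∪ (C ∩ W2)) ∪ (C ∩ {w, x, y, z})).card := by rw [← hdecomp]
      _ = _ := by
        rw [Finset.card_union_of_disjoint d2, Finset.card_union_of_disjoint d1, card4 C]
  -- filtered version
  have cardFilter : ∀ (C : Finset V) (p : V → Prop) [DecidablePred p],
      (C.filter p).card = ((C ∩ W1).filter p).card + ((C ∩ W2).filter p).card +
      ((if w ∈ C ∧ p w then 1 else 0) + (if x ∈ C ∧ p x then 1 else 0) +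
       (if y ∈ C ∧ p y then 1 else 0) + (if z ∈ C ∧ p z then 1 else 0)) := by
    intro C p hp
    rw [cardC (C.filter p)]
    have e1 : (C.filter p) ∩ W1 = (C ∩ W1).filter p := by
      ext v
      simp only [Finset.mem_filter, Finset.mem_inter]
      tauto
    have e2 : (C.filter p) ∩ W2 = (C ∩ W2).filter p := by
      ext v
      simp only [Finset.mem_filter, Finset.mem_inter]
      tauto
    rw [e1, e2]
    simp only [Finset.mem_filter]
  -- partition of a clique between A and B
  have partW : ∀ Wc : Finset V, (A ∩ Wc).card + (B ∩ Wc).card = Wc.card := by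
    intro Wc
    have hd : Disjoint (A ∩ Wc) (B ∩ Wc) := by
      apply Finset.disjoint_left.mpr
      intro v hv hv'
      exact hnB v (Finset.mem_inter.mp hv).1 (Finset.mem_inter.mp hv').1
    rw [← Finset.card_union_of_disjoint hd, ← Finset.union_inter_distrib_right, hU,
      Finset.univ_inter]
  -- filter splits over the partition
  have filterSplit : ∀ (p : V → Prop) [DecidablePred p],
      (A.filter p).card + (B.filter p).card = (Finset.univ.filter p).card := by
    intro p hp
    have hd : Disjoint (A.filter p) (B.filter p) := by
      apply Finset.disjoint_left.mpr
      intro v hv hv'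
      exact hnB v (Finset.mem_filter.mp hv).1 (Finset.mem_filter.mp hv').1
    rw [← Finset.card_union_of_disjoint hd, ← Finset.filter_union, hU]
  -- size of the universe
  have huniv : (Finset.univ : Finset V).card = 2*k + 4 := by
    rw [cardC Finset.univ]
    simp only [Finset.univ_inter, Finset.mem_univ, if_true, hW1card, hW2card]
    omega
  have hcardsum : A.card + B.card = 2*k + 4 := by
    rw [← huniv, ← hU]
    exact (Finset.card_union_of_disjoint hAB).symm
  obtain ⟨a', ha'⟩ : ∃ a', A.card = a' + 1 :=
    ⟨A.card - 1, by have := Finset.card_pos.mpr hAne; omega⟩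
  obtain ⟨b', hb'⟩ : ∃ b', B.card = b' + 1 :=
    ⟨B.card - 1, by have := Finset.card_pos.mpr hBne; omega⟩
  -- normalized conditions
  have NA : ∀ u ∈ A, (2*k+3) * (A.filter (G.Adj u)).card ≥
      a' * (Finset.univ.filter (G.Adj u)).card := by
    intro u hu
    have h1 := hA u hu
    rw [ha'] at h1
    simp only [Nat.add_sub_cancel] at h1
    have h2 := filterSplit (G.Adj u)
    have h3 : B.card + a' = 2*k+3 := by omega
    nlinarith [h1, h2, h3]
  have NB : ∀ u ∈ B, (2*k+3) * (B.filter (G.Adj u)).card ≥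
      b' * (Finset.univ.filter (G.Adj u)).card := by
    intro u hu
    have h1 := hB u hu
    rw [hb'] at h1
    simp only [Nat.add_sub_cancel] at h1
    have h2 := filterSplit (G.Adj u)
    have h3 : A.card + b' = 2*k+3 := by omega
    nlinarith [h1, h2, h3]
  -- adjacency helpers
  have hadjz : ∀ v : V, v ≠ y → ¬ G.Adj v z := by
    intro v hv hadj
    exact hv (hzonly v hadj.symm)
  have hne_of_mem1 : ∀ u ∈ W1, u ≠ y := fun u hu h => hy1 (h ▸ hu)
  have hne_of_mem2 : ∀ u ∈ W2, u ≠ y := fun u hu h => hy2 (h ▸ hu)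
  -- count of neighbours of a W1-vertex inside any set C
  have cliqueCnt1 : ∀ u ∈ W1, ∀ C : Finset V,
      (C.filter (G.Adj u)).card + (if u ∈ C then 1 else 0) =
      (C ∩ W1).card + ((if w ∈ C then 1 else 0) +
        (if x ∈ C ∧ G.Adj u x then 1 else 0) + (if y ∈ C ∧ G.Adj u y then 1 else 0)) := by
    intro u hu C
    have hw' : G.Adj u w := (hwadj u (Finset.mem_union_left _ hu)).symm
    have hz' : ¬ G.Adj u z := hadjz u (hne_of_mem1 u hu)
    have h2 : ((C ∩ W2).filter (G.Adj u)).card = 0 := by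
      rw [Finset.card_eq_zero, Finset.filter_eq_empty_iff]
      intro v hv
      exact hno12 u hu v (Finset.mem_inter.mp hv).2
    have h1 : (C ∩ W1).filter (G.Adj u) = (C ∩ W1).erase u := by
      ext v
      simp only [Finset.mem_filter, Finset.mem_erase, Finset.mem_inter]
      constructor
      · rintro ⟨hv, hadj⟩
        exact ⟨(G.ne_of_adj hadj).symm, hv⟩
      · rintro ⟨hne, hv⟩
        exact ⟨hv, hclique1 u hu v hv.2 hne.symm⟩
    have h1c : ((C ∩ W1).erase u).card + (if u ∈ C then 1 else 0) = (C ∩ W1).card := by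
      by_cases huC : u ∈ C
      · rw [if_pos huC, Finset.card_erase_of_mem (Finset.mem_inter.mpr ⟨huC, hu⟩)]
        have : 1 ≤ (C ∩ W1).card :=
          Finset.card_pos.mpr ⟨u, Finset.mem_inter.mpr ⟨huC, hu⟩⟩
        omega
      · rw [if_neg huC, Finset.erase_eq_of_notMem (fun h => huC (Finset.mem_inter.mp h).1)]
        omega
    rw [cardFilter C (G.Adj u), h1, h2]
    simp only [hw', hz', and_true, and_false, if_false]
    linarith [h1c]
  have cliqueCnt2 : ∀ u ∈ W2, ∀ C : Finset V,
      (C.filter (G.Adj u)).card + (if u ∈ C then 1 else 0) =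
      (C ∩ W2).card + ((if w ∈ C then 1 else 0) +
        (if x ∈ C ∧ G.Adj u x then 1 else 0) + (if y ∈ C ∧ G.Adj u y then 1 else 0)) := by
    intro u hu C
    have hw' : G.Adj u w := (hwadj u (Finset.mem_union_right _ hu)).symm
    have hz' : ¬ G.Adj u z := hadjz u (hne_of_mem2 u hu)
    have h2 : ((C ∩ W1).filter (G.Adj u)).card = 0 := by
      rw [Finset.card_eq_zero, Finset.filter_eq_empty_iff]
      intro v hv hadj
      exact hno12 v (Finset.mem_inter.mp hv).2 u hu hadj.symm
    have h1 : (C ∩ W2).filter (G.Adj u) = (C ∩ W2).erase u := by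
      ext v
      simp only [Finset.mem_filter, Finset.mem_erase, Finset.mem_inter]
      constructor
      · rintro ⟨hv, hadj⟩
        exact ⟨(G.ne_of_adj hadj).symm, hv⟩
      · rintro ⟨hne, hv⟩
        exact ⟨hv, hclique2 u hu v hv.2 hne.symm⟩
    have h1c : ((C ∩ W2).erase u).card + (if u ∈ C then 1 else 0) = (C ∩ W2).card := by
      by_cases huC : u ∈ C
      · rw [if_pos huC, Finset.card_erase_of_mem (Finset.mem_inter.mpr ⟨huC, hu⟩)]
        have : 1 ≤ (C ∩ W2).card :=
          Finset.card_pos.mpr ⟨u, Finset.mem_inter.mpr ⟨huC, hu⟩⟩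
        omega
      · rw [if_neg huC, Finset.erase_eq_of_notMem (fun h => huC (Finset.mem_inter.mp h).1)]
        omega
    rw [cardFilter C (G.Adj u), h1, h2]
    simp only [hw', hz', and_true, and_false, if_false]
    linarith [h1c]
  -- counts for x, y, w, z
  have xCnt : ∀ C : Finset V, (C.filter (G.Adj x)).card =
      ((C ∩ W1).filter (G.Adj x)).card + ((C ∩ W2).filter (G.Adj x)).card +
      ((if w ∈ C then 1 else 0) + (if y ∈ C then 1 else 0)) := by
    intro C
    have hxx : ¬ G.Adj x x := G.irrefl
    have hxz' : ¬ G.Adj x z := hadjz x hxy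
    rw [cardFilter C (G.Adj x)]
    simp only [htri2, htri1, hxx, hxz', and_true, and_false, if_false]
    omega
  have yCnt : ∀ C : Finset V, (C.filter (G.Adj y)).card =
      ((C ∩ W1).filter (G.Adj y)).card + ((C ∩ W2).filter (G.Adj y)).card +
      ((if w ∈ C then 1 else 0) + (if x ∈ C then 1 else 0) + (if z ∈ C then 1 else 0)) := by
    intro C
    have hyy : ¬ G.Adj y y := G.irrefl
    have h1 : G.Adj y x := htri1.symm
    have h2 : G.Adj y z := hzy.symm
    rw [cardFilter C (G.Adj y)]
    simp only [htri3, h1, h2, hyy, and_true, and_false, if_false]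
    omega
  have wCnt : ∀ C : Finset V, (C.filter (G.Adj w)).card =
      (C ∩ W1).card + (C ∩ W2).card + ((if x ∈ C then 1 else 0) + (if y ∈ C then 1 else 0)) := by
    intro C
    have hww : ¬ G.Adj w w := G.irrefl
    have hwz' : ¬ G.Adj w z := hadjz w hwy
    have h1 : (C ∩ W1).filter (G.Adj w) = C ∩ W1 := by
      apply Finset.filter_true_of_mem
      intro v hv
      exact hwadj v (Finset.mem_union_left _ (Finset.mem_inter.mp hv).2)
    have h2 : (C ∩ W2).filter (G.Adj w) = C ∩ W2 := by
      apply Finset.filter_true_of_mem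
      intro v hv
      exact hwadj v (Finset.mem_union_right _ (Finset.mem_inter.mp hv).2)
    rw [cardFilter C (G.Adj w), h1, h2]
    simp only [htri2.symm, htri3.symm, hww, hwz', and_true, and_false, if_false]
    omega
  have zCnt : ∀ C : Finset V, (C.filter (G.Adj z)).card = (if y ∈ C then 1 else 0) := by
    intro C
    have h1 : ((C ∩ W1).filter (G.Adj z)).card = 0 := by
      rw [Finset.card_eq_zero, Finset.filter_eq_empty_iff]
      intro v hv hadj
      exact hy1 ((hzonly v hadj) ▸ (Finset.mem_inter.mp hv).2)
    have h2 : ((C ∩ W2).filter (G.Adj z)).card = 0 := by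
      rw [Finset.card_eq_zero, Finset.filter_eq_empty_iff]
      intro v hv hadj
      exact hy2 ((hzonly v hadj) ▸ (Finset.mem_inter.mp hv).2)
    have h3 : ¬ G.Adj z w := fun h => hwy (hzonly w h)
    have h4 : ¬ G.Adj z x := fun h => hxy (hzonly x h)
    have h5 : ¬ G.Adj z z := G.irrefl
    rw [cardFilter C (G.Adj z), h1, h2]
    simp only [h3, h4, h5, hzy, and_true, and_false, if_false]
    omega
  -- degrees
  have degW1 : ∀ u ∈ W1, (Finset.univ.filter (G.Adj u)).card + 1 =
      k + (1 + (if G.Adj u x then 1 else 0) + (if G.Adj u y then 1 else 0)) := by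
    intro u hu
    have h := cliqueCnt1 u hu Finset.univ
    simp only [Finset.mem_univ, if_true, true_and, Finset.univ_inter] at h
    rw [hW1card] at h
    omega
  have degW2 : ∀ u ∈ W2, (Finset.univ.filter (G.Adj u)).card + 1 =
      k + (1 + (if G.Adj u x then 1 else 0) + (if G.Adj u y then 1 else 0)) := by
    intro u hu
    have h := cliqueCnt2 u hu Finset.univ
    simp only [Finset.mem_univ, if_true, true_and, Finset.univ_inter] at h
    rw [hW2card] at h
    omega
  have degX : (Finset.univ.filter (G.Adj x)).card = 2 * (W1.filter (G.Adj x)).card + 2 := by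
    have h := xCnt Finset.univ
    simp only [Finset.mem_univ, if_true, Finset.univ_inter] at h
    omega
  have degY : (Finset.univ.filter (G.Adj y)).card = 2 * (W1.filter (G.Adj y)).card + 3 := by
    have h := yCnt Finset.univ
    simp only [Finset.mem_univ, if_true, Finset.univ_inter] at h
    omega
  -- step 1 : z ∈ A
  have hzA : z ∈ A := by
    rcases hor z with h | hzB
    · exact h
    exfalso
    have h1 := hB z hzB
    rw [zCnt A, zCnt B, if_neg (hnB y hyA), if_pos hyA] at h1
    have hbc : B.card = 1 := by
      have := Finset.card_pos.mpr hBne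
      omega
    obtain ⟨v, hv⟩ := Finset.card_eq_one.mp hbc
    have hvz : B = {z} := by
      rw [hv]
      rw [hv] at hzB
      simp only [Finset.mem_singleton] at hzB
      rw [hzB]
    have h2 := hA y hyA
    have hdBy : (B.filter (G.Adj y)).card = 1 := by
      rw [yCnt B, hvz]
      have e1 : ({z} : Finset V) ∩ W1 = ∅ := Finset.singleton_inter_of_notMem hz1
      have e2 : ({z} : Finset V) ∩ W2 = ∅ := Finset.singleton_inter_of_notMem hz2
      rw [e1, e2]
      simp [Finset.mem_singleton, Finset.filter_empty, hwz, hxz]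
    have hdAy : (A.filter (G.Adj y)).card + 1 = 2 * (W1.filter (G.Adj y)).card + 3 := by
      have := filterSplit (G.Adj y)
      omega
    rw [hbc, hdBy] at h2
    have hac : A.card = 2*k + 3 := by omega
    rw [hac] at h2
    have hdy3 : (W1.filter (G.Adj y)).card + 1 ≤ k := by omega
    omega
  -- step 2 : w ∈ B
  have hwB : w ∈ B := by
    rcases hor w with hwA | h
    · exfalso
      have h1 := hA w hwA
      have e1 := wCnt A
      have e2 := cardC A
      rw [if_pos hwA, if_pos hyA, if_pos hzA] at e2
      have e3 := wCnt B
      have e4 := cardC B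
      rw [if_neg (hnB w hwA), if_neg (hnB y hyA), if_neg (hnB z hzA)] at e4
      have hdAw : A.card = (A.filter (G.Adj w)).card + 2 := by
        rw [if_pos hyA] at e1
        linarith [e1, e2]
      have hdBw : (B.filter (G.Adj w)).card = B.card := by
        rw [if_neg (hnB y hyA)] at e3
        linarith [e3, e4]
      rw [hdBw] at h1
      exact leafWA (A.card - 1) B.card (A.filter (G.Adj w)).card
        (Finset.card_pos.mpr hBne) (by omega) h1
    · exact h
  have hwnA : w ∉ A := hnA w hwB
  have hpW1 : (A ∩ W1).card + (B ∩ W1).card = k := by rw [partW W1, hW1card]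
  have hpW2 : (A ∩ W2).card + (B ∩ W2).card = k := by rw [partW W2, hW2card]
  have hs1k : (A ∩ W1).card ≤ k := by omega
  have hs2k : (A ∩ W2).card ≤ k := by omega
  have hAfull1 : (A ∩ W1).card = k → A ∩ W1 = W1 := by
    intro h
    exact Finset.eq_of_subset_of_card_le Finset.inter_subset_right (by omega)
  have hAfull2 : (A ∩ W2).card = k → A ∩ W2 = W2 := by
    intro h
    exact Finset.eq_of_subset_of_card_le Finset.inter_subset_right (by omega)
  have hmemA1 : (A ∩ W1).card = k → ∀ v ∈ W1, v ∈ A := by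
    intro h v hv
    have := hAfull1 h
    rw [← this] at hv
    exact (Finset.mem_inter.mp hv).1
  have hmemA2 : (A ∩ W2).card = k → ∀ v ∈ W2, v ∈ A := by
    intro h v hv
    have := hAfull2 h
    rw [← this] at hv
    exact (Finset.mem_inter.mp hv).1
  have hmemB1 : (A ∩ W1).card = 0 → ∀ v ∈ W1, v ∈ B := by
    intro h v hv
    rcases hor v with hvA | hvB
    · exfalso
      have : v ∈ A ∩ W1 := Finset.mem_inter.mpr ⟨hvA, hv⟩
      rw [Finset.card_eq_zero.mp h] at this
      exact absurd this (Finset.notMem_empty v)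
    · exact hvB
  have hmemB2 : (A ∩ W2).card = 0 → ∀ v ∈ W2, v ∈ B := by
    intro h v hv
    rcases hor v with hvA | hvB
    · exfalso
      have : v ∈ A ∩ W2 := Finset.mem_inter.mpr ⟨hvA, hv⟩
      rw [Finset.card_eq_zero.mp h] at this
      exact absurd this (Finset.notMem_empty v)
    · exact hvB
  have hAcard0 := cardC A
  rw [if_neg hwnA, if_pos hyA, if_pos hzA] at hAcard0
  have hc1 : (A ∩ W1).card = 0 ∨ (A ∩ W1).card = k ∨
      (1 ≤ (A ∩ W1).card ∧ (A ∩ W1).card + 1 ≤ k) := by omega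
  have hc2 : (A ∩ W2).card = 0 ∨ (A ∩ W2).card = k ∨
      (1 ≤ (A ∩ W2).card ∧ (A ∩ W2).card + 1 ≤ k) := by omega
  by_cases hxA : x ∈ A
  case pos =>
    have hxnB : x ∉ B := hnB x hxA
    have hAcard : A.card = (A ∩ W1).card + (A ∩ W2).card + 3 := by
      rw [if_pos hxA] at hAcard0
      omega
    -- extraction helpers (χ = 1)
    have extA : ∀ (u : V), u ∈ A → ∀ (S : Finset V),
        (∀ C : Finset V, (C.filter (G.Adj u)).card + (if u ∈ C then 1 else 0) =
          (C ∩ S).card + ((if w ∈ C then 1 else 0) +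
            (if x ∈ C ∧ G.Adj u x then 1 else 0) + (if y ∈ C ∧ G.Adj u y then 1 else 0))) →
        ((Finset.univ.filter (G.Adj u)).card + 1 =
          k + (1 + (if G.Adj u x then 1 else 0) + (if G.Adj u y then 1 else 0))) →
        ((A.filter (G.Adj u)).card + 1 =
            (A ∩ S).card + (if G.Adj u x then 1 else 0) + (if G.Adj u y then 1 else 0) ∧
          (2*k+3) * (A.filter (G.Adj u)).card ≥
            a' * (k + (if G.Adj u x then 1 else 0) + (if G.Adj u y then 1 else 0))) := by
      intro u hu S hcnt hdeg
      constructor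
      · have h := hcnt A
        rw [if_pos hu, if_neg hwnA] at h
        simp only [hxA, hyA, true_and] at h
        omega
      · have h := NA u hu
        have hd : (Finset.univ.filter (G.Adj u)).card =
            k + (if G.Adj u x then 1 else 0) + (if G.Adj u y then 1 else 0) := by omega
        rw [hd] at h
        exact h
    have extB : ∀ (v : V), v ∈ B → ∀ (S : Finset V),
        (∀ C : Finset V, (C.filter (G.Adj v)).card + (if v ∈ C then 1 else 0) =
          (C ∩ S).card + ((if w ∈ C then 1 else 0) +
            (if x ∈ C ∧ G.Adj v x then 1 else 0) + (if y ∈ C ∧ G.Adj v y then 1 else 0))) →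
        ((Finset.univ.filter (G.Adj v)).card + 1 =
          k + (1 + (if G.Adj v x then 1 else 0) + (if G.Adj v y then 1 else 0))) →
        ((B.filter (G.Adj v)).card = (B ∩ S).card ∧
          (2*k+3) * (B.filter (G.Adj v)).card ≥
            b' * (k + (if G.Adj v x then 1 else 0) + (if G.Adj v y then 1 else 0))) := by
      intro v hv S hcnt hdeg
      have hEq : (B.filter (G.Adj v)).card = (B ∩ S).card := by
        have h := hcnt B
        rw [if_pos hv, if_pos hwB, if_neg (by simp [hxnB] : ¬(x ∈ B ∧ G.Adj v x)),
          if_neg (by simp [hnB y hyA] : ¬(y ∈ B ∧ G.Adj v y))] at h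
        omega
      refine ⟨hEq, ?_⟩
      have h := NB v hv
      have hd : (Finset.univ.filter (G.Adj v)).card =
          k + (if G.Adj v x then 1 else 0) + (if G.Adj v y then 1 else 0) := by omega
      rw [hd] at h
      exact h
    -- x-condition contradiction when one clique is fully in A and the other fully in B
    have xcase : ∀ h1 : (A ∩ W1).card = 0, ∀ h2 : (A ∩ W2).card = k, False := by
      intro h1 h2
      have hd1 : ((A ∩ W2).filter (G.Adj x)).card = (W1.filter (G.Adj x)).card := by
        rw [hAfull2 h2, ← hxd2]
      have hd0 : ((A ∩ W1).filter (G.Adj x)).card = 0 := by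
        rw [Finset.card_eq_zero.mp h1]
        simp
      have hx := NA x hxA
      rw [degX] at hx
      have hdAx : (A.filter (G.Adj x)).card = (W1.filter (G.Adj x)).card + 1 := by
        have h := xCnt A
        rw [if_neg hwnA, if_pos hyA, hd1, hd0] at h
        omega
      rw [hdAx] at hx
      have ha'eq : a' = k + 2 := by omega
      rw [ha'eq] at hx
      exact leaf14 k _ hx
    have xcase' : ∀ h1 : (A ∩ W1).card = k, ∀ h2 : (A ∩ W2).card = 0, False := by
      intro h1 h2
      have hd1 : ((A ∩ W1).filter (G.Adj x)).card = (W1.filter (G.Adj x)).card := by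
        rw [hAfull1 h1]
      have hd0 : ((A ∩ W2).filter (G.Adj x)).card = 0 := by
        rw [Finset.card_eq_zero.mp h2]
        simp
      have hx := NA x hxA
      rw [degX] at hx
      have hdAx : (A.filter (G.Adj x)).card = (W1.filter (G.Adj x)).card + 1 := by
        have h := xCnt A
        rw [if_neg hwnA, if_pos hyA, hd1, hd0] at h
        omega
      rw [hdAx] at hx
      have ha'eq : a' = k + 2 := by omega
      rw [ha'eq] at hx
      exact leaf14 k _ hx
    -- 3a : one clique fully in A, the other one split
    have splitcase : ∀ (u : V), u ∈ A → ∀ (S : Finset V),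
        (∀ C : Finset V, (C.filter (G.Adj u)).card + (if u ∈ C then 1 else 0) =
          (C ∩ S).card + ((if w ∈ C then 1 else 0) +
            (if x ∈ C ∧ G.Adj u x then 1 else 0) + (if y ∈ C ∧ G.Adj u y then 1 else 0))) →
        ((Finset.univ.filter (G.Adj u)).card + 1 =
          k + (1 + (if G.Adj u x then 1 else 0) + (if G.Adj u y then 1 else 0))) →
        1 ≤ (A ∩ S).card → (A ∩ S).card + 1 ≤ k →
        a' = k + (A ∩ S).card + 1 + 1 → False := by
      intro u huA S hcnt hdeg hsl hsu ha'eq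
      obtain ⟨hEqd, H⟩ := extA u huA S hcnt hdeg
      rw [ha'eq] at H
      exact leaf4 k (A ∩ S).card 1 _ _ _ hk hsl hsu (le_refl 1)
        (by split <;> omega) (by split <;> omega) (by omega) H
    -- 3c : one clique split, the other fully in B
    have hprop3c : ∀ (S : Finset V),
        (∀ u ∈ S, ∀ C : Finset V, (C.filter (G.Adj u)).card + (if u ∈ C then 1 else 0) =
          (C ∩ S).card + ((if w ∈ C then 1 else 0) +
            (if x ∈ C ∧ G.Adj u x then 1 else 0) + (if y ∈ C ∧ G.Adj u y then 1 else 0))) →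
        (∀ u ∈ S, (Finset.univ.filter (G.Adj u)).card + 1 =
          k + (1 + (if G.Adj u x then 1 else 0) + (if G.Adj u y then 1 else 0))) →
        (3 * k < (S.filter (fun v => G.Adj x v ∨ G.Adj y v)).card * (k + 3)) →
        1 ≤ (A ∩ S).card → (A ∩ S).card + 1 ≤ k → (A ∩ S).card + (B ∩ S).card = k →
        b' = (B ∩ S).card + k → False := by
      intro S hcnt hdeg hpr hsl hsu hpS hb'eq
      have hb'eq2 : b' = 2*k - (A ∩ S).card := by omega
      have stepA : ∀ v ∈ S, (G.Adj x v ∨ G.Adj y v) → v ∈ A := by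
        intro v hv hsp
        by_contra hvA
        have hvB : v ∈ B := (hor v).resolve_left hvA
        obtain ⟨hEq, H⟩ := extB v hvB S (hcnt v hv) (hdeg v hv)
        rw [hEq, hb'eq2] at H
        refine leaf10 k (A ∩ S).card (B ∩ S).card _ _ hk hsl (by omega) ?_
          (by split <;> omega) (by split <;> omega) H
        rcases hsp with h | h
        · rw [if_pos h.symm]; omega
        · rw [if_pos h.symm]; omega
      have hua : (S.filter (fun v => G.Adj x v ∨ G.Adj y v)).card ≤ (A ∩ S).card := by
        apply Finset.card_le_card
        intro v hv
        have hm := Finset.mem_filter.mp hv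
        exact Finset.mem_inter.mpr ⟨stepA v hm.1 hm.2, hm.1⟩
      obtain ⟨v, hv⟩ := Finset.card_pos.mp (show 0 < (B ∩ S).card by omega)
      have hvB := (Finset.mem_inter.mp hv).1
      have hvW := (Finset.mem_inter.mp hv).2
      have hnsp : ¬(G.Adj x v ∨ G.Adj y v) := fun h => hnA v hvB (stepA v hvW h)
      push_neg at hnsp
      obtain ⟨hEq, H⟩ := extB v hvB S (hcnt v hvW) (hdeg v hvW)
      rw [hEq, hb'eq2, if_neg (fun h : G.Adj v x => hnsp.1 h.symm),
        if_neg (fun h : G.Adj v y => hnsp.2 h.symm)] at H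
      exact leaf11 k (A ∩ S).card (B ∩ S).card _ hk (by omega) hua hpr (by linarith [H])
    have hBcard0 := cardC B
    rw [if_pos hwB, if_neg (hnB y hyA), if_neg (hnB z hzA), if_neg hxnB] at hBcard0
    rcases hc1 with h1 | h1 | h1 <;> rcases hc2 with h2 | h2 | h2
    · -- 0 0 : beta in B
      rcases Finset.mem_union.mp hβ1 with hβW | hβW
      · have hβB : β ∈ B := hmemB1 h1 β hβW
        obtain ⟨hEq, H⟩ := extB β hβB W1 (cliqueCnt1 β hβW) (degW1 β hβW)
        rw [hEq, if_pos hβ2.symm, if_pos hβ3.symm] at H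
        have ht : (B ∩ W1).card = k := by omega
        rw [ht] at H
        have hb'eq : b' = 2*k := by omega
        rw [hb'eq] at H
        exact leaf1 k hk (by linarith [H])
      · have hβB : β ∈ B := hmemB2 h2 β hβW
        obtain ⟨hEq, H⟩ := extB β hβB W2 (cliqueCnt2 β hβW) (degW2 β hβW)
        rw [hEq, if_pos hβ2.symm, if_pos hβ3.symm] at H
        have ht : (B ∩ W2).card = k := by omega
        rw [ht] at H
        have hb'eq : b' = 2*k := by omega
        rw [hb'eq] at H
        exact leaf1 k hk (by linarith [H])
    · exact xcase h1 h2
    · -- 0 split : 3c with W2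
      exact hprop3c W2 cliqueCnt2 degW2 hprop2 h2.1 h2.2 (by omega) (by omega)
    · exact xcase' h1 h2
    · -- k k : beta in A
      rcases Finset.mem_union.mp hβ1 with hβW | hβW
      · have hβA : β ∈ A := hmemA1 h1 β hβW
        obtain ⟨hEqd, H⟩ := extA β hβA W1 (cliqueCnt1 β hβW) (degW1 β hβW)
        rw [if_pos hβ2.symm, if_pos hβ3.symm] at hEqd H
        have ha'eq : a' = 2*k+2 := by omega
        have hdA : (A.filter (G.Adj β)).card = k + 1 := by omega
        rw [ha'eq, hdA] at H
        exact leaf3 k 1 hk (le_refl 1) (by linarith [H])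
      · have hβA : β ∈ A := hmemA2 h2 β hβW
        obtain ⟨hEqd, H⟩ := extA β hβA W2 (cliqueCnt2 β hβW) (degW2 β hβW)
        rw [if_pos hβ2.symm, if_pos hβ3.symm] at hEqd H
        have ha'eq : a' = 2*k+2 := by omega
        have hdA : (A.filter (G.Adj β)).card = k + 1 := by omega
        rw [ha'eq, hdA] at H
        exact leaf3 k 1 hk (le_refl 1) (by linarith [H])
    · -- k split : 3a with u in A∩W2
      obtain ⟨u, hu⟩ := Finset.card_pos.mp (show 0 < (A ∩ W2).card by omega)
      exact splitcase u (Finset.mem_inter.mp hu).1 W2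
        (cliqueCnt2 u (Finset.mem_inter.mp hu).2) (degW2 u (Finset.mem_inter.mp hu).2)
        h2.1 h2.2 (by omega)
    · -- split 0 : 3c with W1
      exact hprop3c W1 cliqueCnt1 degW1 hprop1 h1.1 h1.2 (by omega) (by omega)
    · -- split k : 3a with u in A∩W1
      obtain ⟨u, hu⟩ := Finset.card_pos.mp (show 0 < (A ∩ W1).card by omega)
      exact splitcase u (Finset.mem_inter.mp hu).1 W1
        (cliqueCnt1 u (Finset.mem_inter.mp hu).2) (degW1 u (Finset.mem_inter.mp hu).2)
        h1.1 h1.2 (by omega)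
    · -- split split : 3b
      obtain ⟨u1, hu1⟩ := Finset.card_pos.mp (show 0 < (A ∩ W1).card by omega)
      obtain ⟨u2, hu2⟩ := Finset.card_pos.mp (show 0 < (A ∩ W2).card by omega)
      obtain ⟨hEqd1, H1⟩ := extA u1 (Finset.mem_inter.mp hu1).1 W1
        (cliqueCnt1 u1 (Finset.mem_inter.mp hu1).2) (degW1 u1 (Finset.mem_inter.mp hu1).2)
      obtain ⟨hEqd2, H2⟩ := extA u2 (Finset.mem_inter.mp hu2).1 W2
        (cliqueCnt2 u2 (Finset.mem_inter.mp hu2).2) (degW2 u2 (Finset.mem_inter.mp hu2).2)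
      have ha'eq : a' = (A ∩ W1).card + (A ∩ W2).card + 2 := by omega
      rw [ha'eq] at H1 H2
      exact leaf5 k (A ∩ W1).card (A ∩ W2).card _ _ _ _ _ _ hk h1.1 h1.2 h2.1 h2.2
        (by split <;> omega) (by split <;> omega) (by split <;> omega) (by split <;> omega)
        (by omega) (by omega) H1 H2
  case neg =>
    have hxB : x ∈ B := (hor x).resolve_left hxA
    have hAcard : A.card = (A ∩ W1).card + (A ∩ W2).card + 2 := by
      rw [if_neg hxA] at hAcard0
      omega
    -- extraction helpers (χ = 0)
    have extA : ∀ (u : V), u ∈ A → ∀ (S : Finset V),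
        (∀ C : Finset V, (C.filter (G.Adj u)).card + (if u ∈ C then 1 else 0) =
          (C ∩ S).card + ((if w ∈ C then 1 else 0) +
            (if x ∈ C ∧ G.Adj u x then 1 else 0) + (if y ∈ C ∧ G.Adj u y then 1 else 0))) →
        ((Finset.univ.filter (G.Adj u)).card + 1 =
          k + (1 + (if G.Adj u x then 1 else 0) + (if G.Adj u y then 1 else 0))) →
        ((A.filter (G.Adj u)).card + 1 = (A ∩ S).card + (if G.Adj u y then 1 else 0) ∧
          (2*k+3) * (A.filter (G.Adj u)).card ≥
            a' * (k + (if G.Adj u x then 1 else 0) + (if G.Adj u y then 1 else 0))) := by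
      intro u hu S hcnt hdeg
      constructor
      · have h := hcnt A
        rw [if_pos hu, if_neg hwnA, if_neg (by simp [hxA] : ¬(x ∈ A ∧ G.Adj u x))] at h
        simp only [hyA, true_and] at h
        omega
      · have h := NA u hu
        have hd : (Finset.univ.filter (G.Adj u)).card =
            k + (if G.Adj u x then 1 else 0) + (if G.Adj u y then 1 else 0) := by omega
        rw [hd] at h
        exact h
    have extB : ∀ (v : V), v ∈ B → ∀ (S : Finset V),
        (∀ C : Finset V, (C.filter (G.Adj v)).card + (if v ∈ C then 1 else 0) =
          (C ∩ S).card + ((if w ∈ C then 1 else 0) +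
            (if x ∈ C ∧ G.Adj v x then 1 else 0) + (if y ∈ C ∧ G.Adj v y then 1 else 0))) →
        ((Finset.univ.filter (G.Adj v)).card + 1 =
          k + (1 + (if G.Adj v x then 1 else 0) + (if G.Adj v y then 1 else 0))) →
        ((B.filter (G.Adj v)).card = (B ∩ S).card + (if G.Adj v x then 1 else 0) ∧
          (2*k+3) * (B.filter (G.Adj v)).card ≥
            b' * (k + (if G.Adj v x then 1 else 0) + (if G.Adj v y then 1 else 0))) := by
      intro v hv S hcnt hdeg
      constructor
      · have h := hcnt B
        rw [if_pos hv, if_pos hwB, if_neg (by simp [hnB y hyA] : ¬(y ∈ B ∧ G.Adj v y))] at h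
        simp only [hxB, true_and] at h
        omega
      · have h := NB v hv
        have hd : (Finset.univ.filter (G.Adj v)).card =
            k + (if G.Adj v x then 1 else 0) + (if G.Adj v y then 1 else 0) := by omega
        rw [hd] at h
        exact h
    -- y-condition contradiction when one clique full in A, other empty
    have ycase : ((A ∩ W1).card = 0 ∧ (A ∩ W2).card = k) ∨
        ((A ∩ W1).card = k ∧ (A ∩ W2).card = 0) → False := by
      intro hcs
      have hy := NA y hyA
      rw [degY] at hy
      have hdAy : (A.filter (G.Adj y)).card = (W1.filter (G.Adj y)).card + 1 := by
        have h := yCnt A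
        rw [if_neg hwnA, if_neg hxA, if_pos hzA] at h
        rcases hcs with ⟨hc1', hc2'⟩ | ⟨hc1', hc2'⟩
        · have e0 : ((A ∩ W1).filter (G.Adj y)).card = 0 := by
            rw [Finset.card_eq_zero.mp hc1']; simp
          have e1 : ((A ∩ W2).filter (G.Adj y)).card = (W1.filter (G.Adj y)).card := by
            rw [hAfull2 hc2', ← hyd2]
          omega
        · have e0 : ((A ∩ W2).filter (G.Adj y)).card = 0 := by
            rw [Finset.card_eq_zero.mp hc2']; simp
          have e1 : ((A ∩ W1).filter (G.Adj y)).card = (W1.filter (G.Adj y)).card := by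
            rw [hAfull1 hc1']
          omega
      rw [hdAy] at hy
      have ha'eq : a' = k+1 := by
        rcases hcs with ⟨hc1', hc2'⟩ | ⟨hc1', hc2'⟩ <;> omega
      rw [ha'eq] at hy
      exact leaf15 k _ (by omega) hy
    -- 3a χ=0 : one clique full in A, other split
    have splitcase : ∀ (u : V), u ∈ A → ∀ (S : Finset V),
        (∀ C : Finset V, (C.filter (G.Adj u)).card + (if u ∈ C then 1 else 0) =
          (C ∩ S).card + ((if w ∈ C then 1 else 0) +
            (if x ∈ C ∧ G.Adj u x then 1 else 0) + (if y ∈ C ∧ G.Adj u y then 1 else 0))) →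
        ((Finset.univ.filter (G.Adj u)).card + 1 =
          k + (1 + (if G.Adj u x then 1 else 0) + (if G.Adj u y then 1 else 0))) →
        1 ≤ (A ∩ S).card → (A ∩ S).card + 1 ≤ k →
        a' = k + (A ∩ S).card + 1 + 0 → False := by
      intro u huA S hcnt hdeg hsl hsu ha'eq
      obtain ⟨hEqd, H⟩ := extA u huA S hcnt hdeg
      rw [ha'eq] at H
      exact leaf4 k (A ∩ S).card 0 _ _ _ hk hsl hsu (by omega)
        (by split <;> omega) (by split <;> omega) (by omega) H
    -- 3c χ=0 : one clique split, the other fully in B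
    have prop3c : ∀ (S : Finset V),
        (∀ u ∈ S, ∀ C : Finset V, (C.filter (G.Adj u)).card + (if u ∈ C then 1 else 0) =
          (C ∩ S).card + ((if w ∈ C then 1 else 0) +
            (if x ∈ C ∧ G.Adj u x then 1 else 0) + (if y ∈ C ∧ G.Adj u y then 1 else 0))) →
        (∀ u ∈ S, (Finset.univ.filter (G.Adj u)).card + 1 =
          k + (1 + (if G.Adj u x then 1 else 0) + (if G.Adj u y then 1 else 0))) →
        ((S.filter (G.Adj y)).card = (W1.filter (G.Adj y)).card) →
        1 ≤ (A ∩ S).card → (A ∩ S).card + 1 ≤ k → (A ∩ S).card + (B ∩ S).card = k →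
        b' = 2*k+1 - (A ∩ S).card → False := by
      intro S hcnt hdeg hSy hsl hsu hpS hb'eq
      have stepA : ∀ v ∈ S, G.Adj y v → v ∈ A := by
        intro v hv hsp
        by_contra hvA
        have hvB : v ∈ B := (hor v).resolve_left hvA
        obtain ⟨hEq, H⟩ := extB v hvB S (hcnt v hv) (hdeg v hv)
        rw [hEq, hb'eq, if_pos hsp.symm] at H
        exact leaf12 k (A ∩ S).card (B ∩ S).card _ hk hsl (by omega)
          (by split <;> omega) H
      have hua : (W1.filter (G.Adj y)).card ≤ (A ∩ S).card := by
        rw [← hSy]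
        apply Finset.card_le_card
        intro v hv
        have hm := Finset.mem_filter.mp hv
        exact Finset.mem_inter.mpr ⟨stepA v hm.1 hm.2, hm.1⟩
      obtain ⟨v, hv⟩ := Finset.card_pos.mp (show 0 < (B ∩ S).card by omega)
      have hvB := (Finset.mem_inter.mp hv).1
      have hvW := (Finset.mem_inter.mp hv).2
      have hnq : ¬ G.Adj y v := fun h => hnA v hvB (stepA v hvW h)
      obtain ⟨hEq, H⟩ := extB v hvB S (hcnt v hvW) (hdeg v hvW)
      rw [hEq, hb'eq, if_neg (fun h : G.Adj v y => hnq h.symm)] at H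
      exact leaf13 k (A ∩ S).card (B ∩ S).card (if G.Adj v x then 1 else 0) hk (by omega)
        hsu (by omega) (by split <;> omega) (by linarith [H])
    -- per-clique dichotomy for the split-split case
    have fact : ∀ (S : Finset V) (sb : ℕ),
        (∀ u ∈ S, ∀ C : Finset V, (C.filter (G.Adj u)).card + (if u ∈ C then 1 else 0) =
          (C ∩ S).card + ((if w ∈ C then 1 else 0) +
            (if x ∈ C ∧ G.Adj u x then 1 else 0) + (if y ∈ C ∧ G.Adj u y then 1 else 0))) →
        (∀ u ∈ S, (Finset.univ.filter (G.Adj u)).card + 1 =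
          k + (1 + (if G.Adj u x then 1 else 0) + (if G.Adj u y then 1 else 0))) →
        1 ≤ (A ∩ S).card → (A ∩ S).card + 1 ≤ k → 1 ≤ sb → sb + 1 ≤ k →
        (A ∩ S).card + (B ∩ S).card = k →
        a' = (A ∩ S).card + sb + 1 → b' = 2*k+1 - ((A ∩ S).card + sb) →
        ((2*k+3) * (A ∩ S).card ≥ ((A ∩ S).card + sb + 1) * (k+1)) ∨
        ((2*k+3) * ((A ∩ S).card - 1) ≥ ((A ∩ S).card + sb + 1) * k) := by
      intro S sb hcnt hdeg hsl hsu hsbl hsbu hpS ha'eq hb'eq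
      obtain ⟨u, hu⟩ := Finset.card_pos.mp (show 0 < (A ∩ S).card by omega)
      have huA := (Finset.mem_inter.mp hu).1
      have huW := (Finset.mem_inter.mp hu).2
      obtain ⟨hEqd, H⟩ := extA u huA S (hcnt u huW) (hdeg u huW)
      rw [ha'eq] at H
      by_cases hq : G.Adj u y
      · left
        rw [if_pos hq] at hEqd H
        have hdA : (A.filter (G.Adj u)).card = (A ∩ S).card := by omega
        rw [hdA] at H
        exact le_trans (Nat.mul_le_mul_left ((A ∩ S).card + sb + 1) (by omega : k+1 ≤ k + (if G.Adj u x then 1 else 0) + 1)) H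
      · by_cases hp : G.Adj u x
        · exfalso
          rw [if_pos hp, if_neg hq] at H
          rw [if_neg hq] at hEqd
          obtain ⟨v, hv⟩ := Finset.card_pos.mp (show 0 < (B ∩ S).card by omega)
          have hvB := (Finset.mem_inter.mp hv).1
          have hvW := (Finset.mem_inter.mp hv).2
          obtain ⟨hEqv, Hv⟩ := extB v hvB S (hcnt v hvW) (hdeg v hvW)
          rw [hEqv, hb'eq] at Hv
          exact leaf9 k (A ∩ S).card sb (B ∩ S).card _ _ ((A.filter (G.Adj u)).card)
            hk hsl hsu hsbl hsbu (by omega) (by split <;> omega) (by split <;> omega)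
            (by omega) (by linarith [H]) Hv
        · right
          rw [if_neg hp, if_neg hq] at H
          rw [if_neg hq] at hEqd
          have hdA : (A.filter (G.Adj u)).card = (A ∩ S).card - 1 := by omega
          rw [hdA] at H
          linarith [H]
    have hBcard0 := cardC B
    rw [if_pos hwB, if_neg (hnB y hyA), if_neg (hnB z hzA), if_pos hxB] at hBcard0
    rcases hc1 with h1 | h1 | h1 <;> rcases hc2 with h2 | h2 | h2
    · -- 0 0 : alpha in B
      rcases Finset.mem_union.mp hα1 with hαW | hαW
      · have hαB : α ∈ B := hmemB1 h1 α hαW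
        obtain ⟨hEq, H⟩ := extB α hαB W1 (cliqueCnt1 α hαW) (degW1 α hαW)
        rw [hEq, if_neg (fun h : G.Adj α x => hα3 h.symm), if_pos hα2.symm] at H
        have ht : (B ∩ W1).card = k := by omega
        have hb'eq : b' = 2*k+1 := by omega
        rw [ht, hb'eq] at H
        exact leaf2 k (by linarith [H])
      · have hαB : α ∈ B := hmemB2 h2 α hαW
        obtain ⟨hEq, H⟩ := extB α hαB W2 (cliqueCnt2 α hαW) (degW2 α hαW)
        rw [hEq, if_neg (fun h : G.Adj α x => hα3 h.symm), if_pos hα2.symm] at H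
        have ht : (B ∩ W2).card = k := by omega
        have hb'eq : b' = 2*k+1 := by omega
        rw [ht, hb'eq] at H
        exact leaf2 k (by linarith [H])
    · exact ycase (Or.inl ⟨h1, h2⟩)
    · -- 0 split : 3c with W2
      exact prop3c W2 cliqueCnt2 degW2 hyd2.symm h2.1 h2.2 (by omega) (by omega)
    · exact ycase (Or.inr ⟨h1, h2⟩)
    · -- k k : beta in A
      rcases Finset.mem_union.mp hβ1 with hβW | hβW
      · have hβA : β ∈ A := hmemA1 h1 β hβW
        obtain ⟨hEqd, H⟩ := extA β hβA W1 (cliqueCnt1 β hβW) (degW1 β hβW)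
        rw [if_pos hβ3.symm] at hEqd
        rw [if_pos hβ2.symm, if_pos hβ3.symm] at H
        have ha'eq : a' = 2*k+1 := by omega
        have hdA : (A.filter (G.Adj β)).card = k := by omega
        rw [ha'eq, hdA] at H
        exact leaf3 k 0 hk (by omega) (by linarith [H])
      · have hβA : β ∈ A := hmemA2 h2 β hβW
        obtain ⟨hEqd, H⟩ := extA β hβA W2 (cliqueCnt2 β hβW) (degW2 β hβW)
        rw [if_pos hβ3.symm] at hEqd
        rw [if_pos hβ2.symm, if_pos hβ3.symm] at H
        have ha'eq : a' = 2*k+1 := by omega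
        have hdA : (A.filter (G.Adj β)).card = k := by omega
        rw [ha'eq, hdA] at H
        exact leaf3 k 0 hk (by omega) (by linarith [H])
    · -- k split : 3a with u in A∩W2
      obtain ⟨u, hu⟩ := Finset.card_pos.mp (show 0 < (A ∩ W2).card by omega)
      exact splitcase u (Finset.mem_inter.mp hu).1 W2
        (cliqueCnt2 u (Finset.mem_inter.mp hu).2) (degW2 u (Finset.mem_inter.mp hu).2)
        h2.1 h2.2 (by omega)
    · -- split 0 : 3c with W1
      exact prop3c W1 cliqueCnt1 degW1 rfl h1.1 h1.2 (by omega) (by omega)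
    · -- split k : 3a with u in A∩W1
      obtain ⟨u, hu⟩ := Finset.card_pos.mp (show 0 < (A ∩ W1).card by omega)
      exact splitcase u (Finset.mem_inter.mp hu).1 W1
        (cliqueCnt1 u (Finset.mem_inter.mp hu).2) (degW1 u (Finset.mem_inter.mp hu).2)
        h1.1 h1.2 (by omega)
    · -- split split
      have f1 := fact W1 (A ∩ W2).card cliqueCnt1 degW1 h1.1 h1.2 h2.1 h2.2
        (by omega) (by omega) (by omega)
      have f2 := fact W2 (A ∩ W1).card cliqueCnt2 degW2 h2.1 h2.2 h1.1 h1.2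
        (by omega) (by omega) (by omega)
      rcases f1 with f1 | f1 <;> rcases f2 with f2 | f2
      · exact leaf6 k (A ∩ W1).card (A ∩ W2).card h1.2 h2.2 f1 (by linarith [f2])
      · exact leaf8 k (A ∩ W2).card (A ∩ W1).card ((A ∩ W2).card - 1) h2.2 h1.2
          (by omega) (by linarith [f2]) (by linarith [f1])
      · exact leaf8 k (A ∩ W1).card (A ∩ W2).card ((A ∩ W1).card - 1) h1.2 h2.2
          (by omega) (by linarith [f1]) (by linarith [f2])
      · exact leaf7 k (A ∩ W1).card (A ∩ W2).card ((A ∩ W1).card - 1) ((A ∩ W2).card - 1)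
          h1.2 h2.2 (by omega) (by omega) (by linarith [f1]) (by linarith [f2])

theorem no_two_community_structure
    {V : Type*} [Fintype V] [DecidableEq V] (G : SimpleGraph V) [DecidableRel G.Adj]
    (W1 W2 : Finset V) (w x y z : V) (k : ℕ) (hk : 3 ≤ k)
    (hW1card : W1.card = k) (hW2card : W2.card = k)
    (hdisj : Disjoint W1 W2)
    (hwnot : w ∉ W1 ∪ W2) (hxnot : x ∉ W1 ∪ W2) (hynot : y ∉ W1 ∪ W2) (hznot : z ∉ W1 ∪ W2)
    (hwx : w ≠ x) (hwy : w ≠ y) (hwz : w ≠ z) (hxy : x ≠ y) (hxz : x ≠ z) (hyz : y ≠ z)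
    (hcover : ∀ v : V, v ∈ W1 ∨ v ∈ W2 ∨ v = w ∨ v = x ∨ v = y ∨ v = z)
    (hclique1 : ∀ u ∈ W1, ∀ v ∈ W1, u ≠ v → G.Adj u v)
    (hclique2 : ∀ u ∈ W2, ∀ v ∈ W2, u ≠ v → G.Adj u v)
    (htri1 : G.Adj x y) (htri2 : G.Adj x w) (htri3 : G.Adj y w)
    (hwadj : ∀ v ∈ W1 ∪ W2, G.Adj w v)
    (hzy : G.Adj z y) (hzonly : ∀ v : V, G.Adj z v → v = y)
    (hxd1 : 1 ≤ (W1.filter (G.Adj x)).card)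
    (hxd2 : (W1.filter (G.Adj x)).card = (W2.filter (G.Adj x)).card)
    (hxd3 : (W1.filter (G.Adj x)).card ≤ k - 1)
    (hyd1 : 2 ≤ (W1.filter (G.Adj y)).card)
    (hyd2 : (W1.filter (G.Adj y)).card = (W2.filter (G.Adj y)).card)
    (hyd3 : (W1.filter (G.Adj y)).card ≤ k - 1)
    (hprop1 : 3 * k < (W1.filter (fun v => G.Adj x v ∨ G.Adj y v)).card * (k + 3))
    (hprop2 : 3 * k < (W2.filter (fun v => G.Adj x v ∨ G.Adj y v)).card * (k + 3))
    (α β : V) (hα1 : α ∈ W1 ∪ W2) (hα2 : G.Adj y α) (hα3 : ¬ G.Adj x α)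
    (hβ1 : β ∈ W1 ∪ W2) (hβ2 : G.Adj x β) (hβ3 : G.Adj y β)
    (hno12 : ∀ u ∈ W1, ∀ v ∈ W2, ¬ G.Adj u v)
    :
    ¬ ∃ A B : Finset V, Disjoint A B ∧ A ∪ B = Finset.univ ∧
      A.Nonempty ∧ B.Nonempty ∧
      (∀ u ∈ A, B.card * (A.filter (G.Adj u)).card ≥
        (A.card - 1) * (B.filter (G.Adj u)).card) ∧
      (∀ u ∈ B, A.card * (B.filter (G.Adj u)).card ≥
        (B.card - 1) * (A.filter (G.Adj u)).card) := by
  rintro ⟨A, B, hAB, hU, hAne, hBne, hcondA, hcondB⟩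
  have hy : y ∈ A ∪ B := by rw [hU]; exact Finset.mem_univ y
  rcases Finset.mem_union.mp hy with hy | hy
  · exact keyX G W1 W2 w x y z k hk hW1card hW2card hdisj hwnot hxnot hynot hznot
      hwx hwy hwz hxy hxz hyz hcover hclique1 hclique2 htri1 htri2 htri3 hwadj hzy hzonly
      hxd1 hxd2 hxd3 hyd1 hyd2 hyd3 hprop1 hprop2 α β hα1 hα2 hα3 hβ1 hβ2 hβ3 hno12
      A B hAB hU hAne hBne hcondA hcondB hy
  · exact keyX G W1 W2 w x y z k hk hW1card hW2card hdisj hwnot hxnot hynot hznot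
      hwx hwy hwz hxy hxz hyz hcover hclique1 hclique2 htri1 htri2 htri3 hwadj hzy hzonly
      hxd1 hxd2 hxd3 hyd1 hyd2 hyd3 hprop1 hprop2 α β hα1 hα2 hα3 hβ1 hβ2 hβ3 hno12
      B A hAB.symm (by rw [Finset.union_comm]; exact hU) hBne hAne hcondB hcondA hy
end
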